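/- arXiv:2102.10333 — 4 statements merged into one kernel-verified Lean document; each statement's English description precedes it below -/
import Mathlib

section
/- Let U be any subspace of V that is closed under the averaging operator 𝒬. Define S = {f ∈ U : f is 𝒢-equivariant, i.e. f(gx) = ψ(g)f(x) for all g ∈ 𝒢, x ∈ 𝒳} and A = {f ∈ U : 𝒬f = 0}. Then U admits an orthogonal decomposition U = S ⊕ A with respect to ⟨·,·⟩_μ: every u ∈ U can be written uniquely (μ-a.e.) as u = s + a with s ∈ S, a ∈ A and ⟨s, a⟩_μ = 0. -/
/-!
Write `T (x, g) = g • x`. Since `λ` is a probability measure and `μ` is `𝒢`-invariant, `T` pushes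
`μ ⊗ λ` forward to `μ`; this gives at once that `𝒬` respects `μ`-a.e. equality, that the integrand
of `𝒬 f` is `λ`-integrable for a.e. `x` when `f ∈ L²(μ)`, and, by Fubini, that
`⟨s, 𝒬 a⟩_μ = ⟨s, a⟩_μ` for every equivariant `s`. Right invariance of `λ` makes `𝒬 u` equivariant,
and `𝒬` fixes equivariant functions, so `𝒬 (s + a) = s + 𝒬 a` for `s` equivariant. Hence
`u = 𝒬 u + (u - 𝒬 u)` is the decomposition, and any other one `u = s' + a'` has `s' = 𝒬 u`.
-/

open MeasureTheory
open scoped RealInnerProductSpace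

/-- The equivariant averaging operator `𝒬`:
`(𝒬 f)(x) = ∫_𝒢 ψ(g⁻¹) f(g • x) dλ(g)`. -/
noncomputable def Qavg {G X : Type*} [Group G] [MeasurableSpace G] [MulAction G X] {k : ℕ}
    (lam : Measure G)
    (ψ : G →* (EuclideanSpace ℝ (Fin k) ≃ₗᵢ[ℝ] EuclideanSpace ℝ (Fin k)))
    (f : X → EuclideanSpace ℝ (Fin k)) : X → EuclideanSpace ℝ (Fin k) :=
  fun x => ∫ g, ψ g⁻¹ (f (g • x)) ∂lam

section RightInvariant

variable {G E : Type*} [Group G] [MeasurableSpace G] [NormedAddCommGroup E] [NormedSpace ℝ E]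
  {lam : Measure G} [NeZero lam] [lam.IsMulRightInvariant]

-- A map that is not a.e.-measurable pushes `lam` forward to `0`.
theorem aemeasurable_mul_right_of_isMulRightInvariant (g : G) : AEMeasurable (· * g) lam := by
  by_contra h
  have := Measure.map_of_not_aemeasurable h
  rw [Measure.IsMulRightInvariant.map_mul_right_eq_self] at this
  exact NeZero.ne lam this

theorem integral_mul_right_eq_self_of_isMulRightInvariant (F : G → E) (g : G) :
    ∫ h, F (h * g) ∂lam = ∫ h, F h ∂lam := by
  by_cases hF : AEStronglyMeasurable F lam
  · rw [← integral_map (aemeasurable_mul_right_of_isMulRightInvariant g)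
      (by rwa [Measure.IsMulRightInvariant.map_mul_right_eq_self]),
      Measure.IsMulRightInvariant.map_mul_right_eq_self]
  · have hFg : ¬ AEStronglyMeasurable (fun h => F (h * g)) lam := fun hFg => by
      rw [← Measure.IsMulRightInvariant.map_mul_right_eq_self (μ := lam) g⁻¹] at hFg
      exact hF (by simpa [Function.comp_def] using
        hFg.comp_aemeasurable (aemeasurable_mul_right_of_isMulRightInvariant g⁻¹))
    rw [integral_non_aestronglyMeasurable hF, integral_non_aestronglyMeasurable hFg]

end RightInvariant

theorem measurable_symm_apply_of_measurable_apply {α E : Type*} [MeasurableSpace α]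
    [NormedAddCommGroup E] [InnerProductSpace ℝ E] [FiniteDimensional ℝ E] [MeasurableSpace E]
    [BorelSpace E] {T : α → E ≃ₗᵢ[ℝ] E} (hT : Measurable fun p : α × E => T p.1 p.2) :
    Measurable fun p : α × E => (T p.1).symm p.2 := by
  let b := stdOrthonormalBasis ℝ E
  have hexpand : ∀ p : α × E, (T p.1).symm p.2 = ∑ i, ⟪T p.1 (b i), p.2⟫ • b i := fun p => by
    simp_rw [LinearIsometryEquiv.inner_map_eq_flip, b.sum_repr']
  simp_rw [hexpand]
  exact Finset.measurable_sum _ fun i _ =>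
    ((hT.comp (measurable_fst.prodMk measurable_const)).inner measurable_snd).smul_const _

@[simp]
theorem map_inv_apply_map_apply {G E : Type*} [Group G] [SeminormedAddCommGroup E]
    [NormedSpace ℝ E] (φ : G →* (E ≃ₗᵢ[ℝ] E)) (g : G) (y : E) : φ g⁻¹ (φ g y) = y := by
  rw [map_inv, LinearIsometryEquiv.coe_inv, LinearIsometryEquiv.symm_apply_apply]

section Averaging

variable {G X : Type*} [Group G] [MeasurableSpace G] [MulAction G X] {k : ℕ}
  (lam : Measure G) (ψ : G →* (EuclideanSpace ℝ (Fin k) ≃ₗᵢ[ℝ] EuclideanSpace ℝ (Fin k)))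

theorem qavg_smul_apply [NeZero lam] [lam.IsMulRightInvariant] (f : X → EuclideanSpace ℝ (Fin k)) (g : G)
    (x : X) : Qavg lam ψ f (g • x) = ψ g (Qavg lam ψ f x) :=
  calc Qavg lam ψ f (g • x)
      = ∫ h, ψ (h * g⁻¹)⁻¹ (f ((h * g⁻¹) • g • x)) ∂lam :=
        (integral_mul_right_eq_self_of_isMulRightInvariant _ g⁻¹).symm
    _ = ∫ h, ψ g (ψ h⁻¹ (f (h • x))) ∂lam := by simp [mul_smul, map_mul]
    _ = ψ g (Qavg lam ψ f x) := (ψ g).toContinuousLinearEquiv.integral_comp_comm _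

variable [IsProbabilityMeasure lam] [MeasurableSpace X] [MeasurableSMul₂ G X]
  {μ : Measure X} [SFinite μ] [SMulInvariantMeasure G X μ]

variable (μ) in
theorem measurePreserving_smul_prod :
    MeasurePreserving (fun p : X × G => p.2 • p.1) (μ.prod lam) μ := by
  have hmeas : Measurable fun p : X × G => p.2 • p.1 := measurable_smul.comp measurable_swap
  refine ⟨hmeas, Measure.ext fun t ht => ?_⟩
  rw [Measure.map_apply hmeas ht, Measure.prod_apply_symm (hmeas ht)]
  have hsec : ∀ g : G, (fun x => (x, g)) ⁻¹' ((fun p : X × G => p.2 • p.1) ⁻¹' t) =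
      (g • ·) ⁻¹' t := fun g => rfl
  simp_rw [hsec, measure_preimage_smul, lintegral_const, measure_univ, mul_one]

theorem qavg_congr_ae {f h : X → EuclideanSpace ℝ (Fin k)} (hfh : f =ᵐ[μ] h) :
    Qavg lam ψ f =ᵐ[μ] Qavg lam ψ h := by
  have hfh' := Measure.ae_ae_of_ae_prod
    ((measurePreserving_smul_prod lam μ).quasiMeasurePreserving.ae hfh)
  filter_upwards [hfh'] with x hx
  exact integral_congr_ae (hx.mono fun g hg => by simp only [hg])

variable {ψ}

theorem ae_integrable_qavg_integrand
    (hψ : Measurable fun p : G × EuclideanSpace ℝ (Fin k) => ψ p.1 p.2)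
    {f : X → EuclideanSpace ℝ (Fin k)} (hf : MemLp f 2 μ) :
    ∀ᵐ x ∂μ, Integrable (fun g => ψ g⁻¹ (f (g • x))) lam := by
  have hfT : MemLp (fun p : X × G => f (p.2 • p.1)) 2 (μ.prod lam) :=
    hf.comp_measurePreserving (measurePreserving_smul_prod lam μ)
  have hψinv : Measurable fun p : G × EuclideanSpace ℝ (Fin k) => ψ p.1⁻¹ p.2 := by
    simpa only [map_inv, LinearIsometryEquiv.coe_inv] using
      measurable_symm_apply_of_measurable_apply hψ
  have hF : MemLp (fun p : X × G => ψ p.2⁻¹ (f (p.2 • p.1))) 2 (μ.prod lam) :=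
    hfT.congr_norm (hψinv.comp_aemeasurable
      (measurable_snd.aemeasurable.prodMk hfT.1.aemeasurable)).aestronglyMeasurable
      (ae_of_all _ fun p => by simp)
  filter_upwards [hF.1.prodMk_left,
    ((memLp_two_iff_integrable_sq_norm hF.1).1 hF).prod_right_ae] with x hxm hxi
  exact ((memLp_two_iff_integrable_sq_norm hxm).2 hxi).integrable one_le_two

theorem qavg_add_of_equivariant
    (hψ : Measurable fun p : G × EuclideanSpace ℝ (Fin k) => ψ p.1 p.2)
    {s a : X → EuclideanSpace ℝ (Fin k)}
    (hs : ∀ g x, s (g • x) = ψ g (s x)) (ha : MemLp a 2 μ) :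
    Qavg lam ψ (s + a) =ᵐ[μ] s + Qavg lam ψ a := by
  filter_upwards [ae_integrable_qavg_integrand lam hψ ha] with x hx
  simp only [Qavg, Pi.add_apply, map_add, hs, map_inv_apply_map_apply]
  rw [integral_add (integrable_const _) hx, integral_const, probReal_univ, one_smul]

-- Under `(x, g) ↦ g • x` the Fubini integrand `⟪s x, ψ g⁻¹ (a (g • x))⟫ = ⟪s (g • x), a (g • x)⟫`
-- becomes `⟪s, a⟫`.
theorem integral_inner_qavg_of_equivariant
    (hψ : Measurable fun p : G × EuclideanSpace ℝ (Fin k) => ψ p.1 p.2)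
    {s a : X → EuclideanSpace ℝ (Fin k)}
    (hs : ∀ g x, s (g • x) = ψ g (s x)) (hs_mem : MemLp s 2 μ) (ha : MemLp a 2 μ) :
    ∫ x, ⟪s x, Qavg lam ψ a x⟫ ∂μ = ∫ x, ⟪s x, a x⟫ ∂μ := by
  have hT := measurePreserving_smul_prod lam μ
  have hK : Integrable (fun x => ⟪s x, a x⟫) μ :=
    (L2.integrable_inner (𝕜 := ℝ) hs_mem.toLp ha.toLp).congr <| by
      filter_upwards [hs_mem.coeFn_toLp, ha.coeFn_toLp] with x hsx hax
      rw [hsx, hax]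
  have hH : (fun p : X × G => ⟪s p.1, ψ p.2⁻¹ (a (p.2 • p.1))⟫) =
      (fun x => ⟪s x, a x⟫) ∘ (fun p => p.2 • p.1) := by
    ext p
    simp [map_inv, ← LinearIsometryEquiv.inner_map_eq_flip, hs]
  calc ∫ x, ⟪s x, Qavg lam ψ a x⟫ ∂μ
      = ∫ x, ∫ g, ⟪s x, ψ g⁻¹ (a (g • x))⟫ ∂lam ∂μ := by
        refine integral_congr_ae ?_
        filter_upwards [ae_integrable_qavg_integrand lam hψ ha] with x hx
        exact (integral_inner hx (s x)).symm
    _ = ∫ p : X × G, ⟪s p.1, ψ p.2⁻¹ (a (p.2 • p.1))⟫ ∂(μ.prod lam) :=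
        (integral_prod _ (hH ▸ hT.integrable_comp_of_integrable hK)).symm
    _ = ∫ x, ⟪s x, a x⟫ ∂μ := by
        rw [hH, Function.comp_def, ← integral_map (f := fun x => ⟪s x, a x⟫) hT.aemeasurable
          (by rw [hT.map_eq]; exact hK.aestronglyMeasurable), hT.map_eq]

end Averaging

theorem stmt0_general {G X : Type*} [Group G] [MeasurableSpace G] [MeasurableSpace X] [MulAction G X]
    {k : ℕ}
    (lam : Measure G) [IsProbabilityMeasure lam]
    (hrinv : ∀ g : G, lam.map (fun h => h * g) = lam)
    (ψ : G →* (EuclideanSpace ℝ (Fin k) ≃ₗᵢ[ℝ] EuclideanSpace ℝ (Fin k)))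
    (hψ : Measurable fun p : G × EuclideanSpace ℝ (Fin k) => ψ p.1 p.2)
    (hact : Measurable fun p : G × X => p.1 • p.2)
    (μ : Measure X) [SigmaFinite μ]
    (hμinv : ∀ g : G, μ.map (fun x => g • x) = μ)
    (U : Set (X → EuclideanSpace ℝ (Fin k)))
    (hUV : ∀ f ∈ U, MemLp f 2 μ)
    (hUadd : ∀ f ∈ U, ∀ h ∈ U, f + h ∈ U)
    (hUsmul : ∀ c : ℝ, ∀ f ∈ U, c • f ∈ U)
    (hUQ : ∀ f ∈ U, Qavg lam ψ f ∈ U) :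
    ∀ u ∈ U, ∃ s ∈ U, ∃ a ∈ U,
      (∀ (g : G) (x : X), s (g • x) = ψ g (s x)) ∧
      (Qavg lam ψ a =ᵐ[μ] 0) ∧
      (u =ᵐ[μ] s + a) ∧
      (∫ x, (inner ℝ (s x) (a x) : ℝ) ∂μ = 0) ∧
      (∀ s' ∈ U, ∀ a' ∈ U,
        (∀ (g : G) (x : X), s' (g • x) = ψ g (s' x)) →
        (Qavg lam ψ a' =ᵐ[μ] 0) →
        (u =ᵐ[μ] s' + a') → s' =ᵐ[μ] s ∧ a' =ᵐ[μ] a) := by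
  have : lam.IsMulRightInvariant := ⟨hrinv⟩
  have : MeasurableSMul₂ G X := ⟨hact⟩
  have : SMulInvariantMeasure G X μ :=
    ⟨fun g t ht => by rw [← Measure.map_apply (measurable_const_smul g) ht, hμinv]⟩
  intro u hu
  set s := Qavg lam ψ u
  have hsU : s ∈ U := hUQ u hu
  have haU : u - s ∈ U := by
    simpa [sub_eq_add_neg] using hUadd u hu _ (hUsmul (-1) s hsU)
  have hs : ∀ (g : G) (x : X), s (g • x) = ψ g (s x) := qavg_smul_apply lam ψ u
  have hQa : Qavg lam ψ (u - s) =ᵐ[μ] 0 := by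
    have hsplit := qavg_add_of_equivariant lam hψ hs (hUV _ haU)
    rw [add_sub_cancel] at hsplit
    filter_upwards [hsplit] with x hx
    simpa [s] using hx.symm
  refine ⟨s, hsU, u - s, haU, hs, hQa, by simp, ?_, ?_⟩
  · rw [← integral_inner_qavg_of_equivariant lam hψ hs (hUV s hsU) (hUV _ haU)]
    refine integral_eq_zero_of_ae ?_
    filter_upwards [hQa] with x hx
    simp [hx]
  · intro s' _ a' ha' hs' hQa' hu'
    have hs's : s' =ᵐ[μ] s :=
      calc s' =ᵐ[μ] s' + Qavg lam ψ a' := by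
            filter_upwards [hQa'] with x hx
            simp [hx]
        _ =ᵐ[μ] Qavg lam ψ (s' + a') := (qavg_add_of_equivariant lam hψ hs' (hUV a' ha')).symm
        _ =ᵐ[μ] s := (qavg_congr_ae lam ψ hu').symm
    refine ⟨hs's, ?_⟩
    filter_upwards [hu', hs's] with x hux hsx
    simp [hux, hsx]

/-- Let `U` be any subspace of `V` (the square-integrable functions
`𝒳 → ℝᵏ` w.r.t. a `𝒢`-invariant measure `μ`) closed under the averaging operator `𝒬`.
With `S = {f ∈ U : f is 𝒢-equivariant}` and `A = {f ∈ U : 𝒬f = 0}`, every `u ∈ U` can be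
written uniquely (μ-a.e.) as `u = s + a` with `s ∈ S`, `a ∈ A` and `⟨s, a⟩_μ = 0`:
the orthogonal decomposition `U = S ⊕ A`. -/
theorem stmt0 {G X : Type*} [Group G] [MeasurableSpace G] [MeasurableSpace X] [MulAction G X]
    {k : ℕ}
    (lam : Measure G) [IsProbabilityMeasure lam]
    (hlinv : ∀ g : G, lam.map (fun h => g * h) = lam)
    (hrinv : ∀ g : G, lam.map (fun h => h * g) = lam)
    (ψ : G →* (EuclideanSpace ℝ (Fin k) ≃ₗᵢ[ℝ] EuclideanSpace ℝ (Fin k)))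
    (hψ : Measurable fun p : G × EuclideanSpace ℝ (Fin k) => ψ p.1 p.2)
    (hact : Measurable fun p : G × X => p.1 • p.2)
    (μ : Measure X) [SigmaFinite μ]
    (hμinv : ∀ g : G, μ.map (fun x => g • x) = μ)
    (U : Set (X → EuclideanSpace ℝ (Fin k)))
    (hUV : ∀ f ∈ U, MemLp f 2 μ)
    (hU0 : (0 : X → EuclideanSpace ℝ (Fin k)) ∈ U)
    (hUadd : ∀ f ∈ U, ∀ h ∈ U, f + h ∈ U)
    (hUsmul : ∀ c : ℝ, ∀ f ∈ U, c • f ∈ U)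
    (hUQ : ∀ f ∈ U, Qavg lam ψ f ∈ U) :
    ∀ u ∈ U, ∃ s ∈ U, ∃ a ∈ U,
      (∀ (g : G) (x : X), s (g • x) = ψ g (s x)) ∧
      (Qavg lam ψ a =ᵐ[μ] 0) ∧
      (u =ᵐ[μ] s + a) ∧
      (∫ x, (inner ℝ (s x) (a x) : ℝ) ∂μ = 0) ∧
      (∀ s' ∈ U, ∀ a' ∈ U,
        (∀ (g : G) (x : X), s' (g • x) = ψ g (s' x)) →
        (Qavg lam ψ a' =ᵐ[μ] 0) →
        (u =ᵐ[μ] s' + a') → s' =ᵐ[μ] s ∧ a' =ᵐ[μ] a) :=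
  stmt0_general lam hrinv ψ hψ hact μ hμinv U hUV hUadd hUsmul hUQ
end

section
/- Let X ∼ μ where μ is a 𝒢-invariant probability distribution on 𝒳, and let Y = f*(X) + ξ ∈ ℝᵏ, where ξ is a random element of ℝᵏ independent of X with zero mean and finite variance, and f*: 𝒳 → ℝᵏ is 𝒢-equivariant. Then for any f ∈ V, the generalisation gap satisfies Δ(f, 𝒬f) := E[‖Y − f(X)‖₂²] − E[‖Y − (𝒬f)(X)‖₂²] = ‖f^⊥‖_μ², where f^⊥ = f − 𝒬f. -/
/-!
By invariance of `μ` and of `λ`, `𝒬` acts on `L²(μ; ℝᵏ)` as the orthogonal projection onto the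
equivariant functions: for equivariant `e`, unfolding `𝒬`, moving `ψ(g⁻¹)` across the inner product
and averaging over the orbits shows `∫ ⟪e, 𝒬 f⟫ dμ = ∫ ⟪e, f⟫ dμ`, and `𝒬 f` is itself equivariant
by right invariance of `λ`. Hence `f - 𝒬 f` is orthogonal to the equivariant `𝒬 f - f*`, and
Pythagoras gives `‖f* - f‖²_μ = ‖f* - 𝒬 f‖²_μ + ‖f - 𝒬 f‖²_μ`. On the probability side,
independence and `E ξ = 0` kill the cross term, so `E‖Y - h(X)‖² = ‖f* - h‖²_μ + E‖ξ‖²` for every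
`h ∈ L²(μ)`; subtracting the instances `h = f` and `h = 𝒬 f` gives the claim.
-/

open MeasureTheory ProbabilityTheory

open scoped InnerProductSpace

section InnerProduct

variable {α E : Type*} {mα : MeasurableSpace α} {μ : Measure α}
  [NormedAddCommGroup E] [InnerProductSpace ℝ E]

lemma MeasureTheory.MemLp.integrable_inner {u w : α → E} (hu : MemLp u 2 μ) (hw : MemLp w 2 μ) :
    Integrable (fun x => ⟪u x, w x⟫_ℝ) μ := by
  refine (L2.integrable_inner (𝕜 := ℝ) (hu.toLp u) (hw.toLp w)).congr ?_
  filter_upwards [hu.coeFn_toLp, hw.coeFn_toLp] with x hux hwx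
  rw [hux, hwx]

lemma integral_norm_add_sq_of_integral_inner_eq_zero {u w : α → E} (hu : MemLp u 2 μ)
    (hw : MemLp w 2 μ) (huw : ∫ x, ⟪u x, w x⟫_ℝ ∂μ = 0) :
    ∫ x, ‖u x + w x‖ ^ 2 ∂μ = ∫ x, ‖u x‖ ^ 2 ∂μ + ∫ x, ‖w x‖ ^ 2 ∂μ := by
  have hu2 := hu.integrable_norm_pow two_ne_zero
  have huw' := (hu.integrable_inner hw).const_mul 2
  simp_rw [norm_add_sq_real]
  rw [integral_add (hu2.fun_add huw') (hw.integrable_norm_pow two_ne_zero), integral_add hu2 huw',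
    integral_const_mul, huw, mul_zero, add_zero]

lemma sq_integral_le_integral_sq [IsProbabilityMeasure μ] {h : α → ℝ} (hh : MemLp h 2 μ) :
    (∫ x, h x ∂μ) ^ 2 ≤ ∫ x, h x ^ 2 ∂μ := by
  have hvar := variance_nonneg h μ
  rw [variance_eq_sub hh] at hvar
  simpa [sub_nonneg] using hvar

end InnerProduct

lemma integral_norm_comp_add_sq_of_indepFun {Ω X E : Type*} {mΩ : MeasurableSpace Ω}
    {mX : MeasurableSpace X} [NormedAddCommGroup E] [InnerProductSpace ℝ E] [CompleteSpace E]
    [MeasurableSpace E] [BorelSpace E] {P : Measure Ω} [IsProbabilityMeasure P]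
    {Z : Ω → X} {ξ : Ω → E} (hZ : AEMeasurable Z P) (hξ : MemLp ξ 2 P) (hξmean : ∫ ω, ξ ω ∂P = 0)
    (hindep : IndepFun Z ξ P) {v : X → E} (hv : MemLp v 2 (P.map Z)) :
    ∫ ω, ‖v (Z ω) + ξ ω‖ ^ 2 ∂P = ∫ x, ‖v x‖ ^ 2 ∂(P.map Z) + ∫ ω, ‖ξ ω‖ ^ 2 ∂P := by
  have : IsProbabilityMeasure (P.map Z) := Measure.isProbabilityMeasure_map hZ
  have hvZ : MemLp (fun ω => v (Z ω)) 2 P := hv.comp_of_map hZ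
  have hξ' : Integrable id (P.map ξ) :=
    (integrable_map_measure hξ.1.aestronglyMeasurable_id_map hξ.1.aemeasurable).2
      (hξ.integrable one_le_two)
  have horth : ∫ ω, ⟪v (Z ω), ξ ω⟫_ℝ ∂P = 0 := by
    have h := hindep.integral_bilin_comp_comp hZ hξ.1.aemeasurable (hv.integrable one_le_two) hξ'
      (innerSL ℝ)
    simp only [id, hξmean] at h
    exact h.trans (map_zero _)
  rw [integral_norm_add_sq_of_integral_inner_eq_zero hvZ hξ horth,
    integral_map hZ hv.integrable_norm_pow'.1]

section Representation

variable {G E : Type*} [Group G] [NormedAddCommGroup E] [InnerProductSpace ℝ E]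
  {ψ : G →* (E ≃ₗᵢ[ℝ] E)}

lemma inner_map_inv_apply (g : G) (v w : E) : ⟪v, ψ g⁻¹ w⟫_ℝ = ⟪ψ g v, w⟫_ℝ := by
  rw [map_inv, LinearIsometryEquiv.coe_inv, LinearIsometryEquiv.inner_map_eq_flip]

lemma measurable_map_inv_apply [MeasurableSpace G] [FiniteDimensional ℝ E]
    [MeasurableSpace E] [BorelSpace E] (hψ : Measurable fun p : G × E => ψ p.1 p.2) :
    Measurable fun p : G × E => ψ p.1⁻¹ p.2 := by
  -- inversion on `G` need not be measurable: read `ψ g⁻¹` off the matrix coefficients of `ψ g`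
  let b := stdOrthonormalBasis ℝ E
  have hexpand : ∀ (g : G) (v : E), ψ g⁻¹ v = ∑ i, ⟪ψ g (b i), v⟫_ℝ • b i := fun g v => by
    simp_rw [← inner_map_inv_apply, b.sum_repr']
  simp_rw [hexpand]
  exact Finset.measurable_sum _ fun i _ =>
    ((hψ.comp (measurable_fst.prodMk measurable_const)).inner measurable_snd).smul_const _

end Representation

lemma measurePreserving_smul_prod_s7 {G X : Type*} [MeasurableSpace G] [MeasurableSpace X]
    [SMul G X] {lam : Measure G} [IsProbabilityMeasure lam] {μ : Measure X} [SFinite μ]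
    (hact : Measurable fun p : G × X => p.1 • p.2)
    (hμinv : ∀ g : G, μ.map (fun x => g • x) = μ) :
    MeasurePreserving (fun p : X × G => p.2 • p.1) (μ.prod lam) μ := by
  have hact' : Measurable fun p : X × G => p.2 • p.1 := hact.comp measurable_swap
  refine ⟨hact', ?_⟩
  ext s hs
  have hslice : ∀ g : G, μ {x | g • x ∈ s} = μ s := fun g => by
    have hg : Measurable fun x : X => g • x := hact.comp (measurable_const.prodMk measurable_id)
    conv_rhs => rw [← hμinv g]
    rw [Measure.map_apply hg hs]
    rfl
  rw [Measure.map_apply hact' hs, Measure.prod_apply_symm (hact' hs)]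
  simp [Set.preimage, hslice]

lemma integral_integral_comp_smul {G X : Type*} [MeasurableSpace G] [MeasurableSpace X]
    [SMul G X] {lam : Measure G} [SFinite lam] {μ : Measure X} [SFinite μ]
    (hT : MeasurePreserving (fun p : X × G => p.2 • p.1) (μ.prod lam) μ)
    {φ : X → ℝ} (hφ : Integrable φ μ) :
    ∫ x, ∫ g, φ (g • x) ∂lam ∂μ = ∫ x, φ x ∂μ := by
  calc ∫ x, ∫ g, φ (g • x) ∂lam ∂μ = ∫ p, φ (p.2 • p.1) ∂(μ.prod lam) :=
        (integral_prod _ (hT.integrable_comp_of_integrable hφ)).symm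
    _ = ∫ x, φ x ∂((μ.prod lam).map fun p : X × G => p.2 • p.1) :=
        (integral_map hT.measurable.aemeasurable (by rw [hT.map_eq]; exact hφ.1)).symm
    _ = ∫ x, φ x ∂μ := by rw [hT.map_eq]

namespace Qavg

variable {G X : Type*} [Group G] [MeasurableSpace G] [MeasurableSpace X] [MulAction G X]
  {k : ℕ} {lam : Measure G}
  {ψ : G →* (EuclideanSpace ℝ (Fin k) ≃ₗᵢ[ℝ] EuclideanSpace ℝ (Fin k))} {μ : Measure X}
  {f : X → EuclideanSpace ℝ (Fin k)}

lemma integrable_integrand [SFinite μ]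
    (hT : MeasurePreserving (fun p : X × G => p.2 • p.1) (μ.prod lam) μ)
    (hψ : Measurable fun p : G × EuclideanSpace ℝ (Fin k) => ψ p.1⁻¹ p.2)
    (hf : Integrable f μ) :
    Integrable (fun p : X × G => ψ p.2⁻¹ (f (p.2 • p.1))) (μ.prod lam) := by
  have hfT : AEMeasurable (fun p : X × G => f (p.2 • p.1)) (μ.prod lam) :=
    hf.1.aemeasurable.comp_quasiMeasurePreserving hT.quasiMeasurePreserving
  refine (hT.integrable_comp_of_integrable hf.norm).congr'
    (hψ.comp_aemeasurable (measurable_snd.aemeasurable.prodMk hfT)).aestronglyMeasurable ?_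
  exact ae_of_all _ fun p => by simp

lemma memLp_two [IsProbabilityMeasure lam] [IsFiniteMeasure μ]
    (hT : MeasurePreserving (fun p : X × G => p.2 • p.1) (μ.prod lam) μ)
    (hψ : Measurable fun p : G × EuclideanSpace ℝ (Fin k) => ψ p.1⁻¹ p.2)
    (hf : MemLp f 2 μ) :
    MemLp (Qavg lam ψ f) 2 μ := by
  have hF := integrable_integrand hT hψ (hf.integrable one_le_two)
  have hsq : Integrable (fun p : X × G => ‖f (p.2 • p.1)‖ ^ 2) (μ.prod lam) :=
    hT.integrable_comp_of_integrable (hf.integrable_norm_pow two_ne_zero)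
  have hQ : AEStronglyMeasurable (Qavg lam ψ f) μ := hF.1.integral_prod_right'
  refine (memLp_two_iff_integrable_sq_norm hQ).2 (hsq.integral_prod_left.mono' (hQ.norm.pow 2) ?_)
  filter_upwards [hF.prod_right_ae, hsq.prod_right_ae] with x hFx hsqx
  have hnorm : ∀ g : G, ‖ψ g⁻¹ (f (g • x))‖ = ‖f (g • x)‖ := fun g =>
    LinearIsometryEquiv.norm_map _ _
  have hfx : MemLp (fun g => ‖f (g • x)‖) 2 lam := by
    refine (memLp_two_iff_integrable_sq ?_).2 hsqx
    simpa only [hnorm] using hFx.norm.1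
  calc ‖‖Qavg lam ψ f x‖ ^ 2‖ = ‖∫ g, ψ g⁻¹ (f (g • x)) ∂lam‖ ^ 2 := by simp [Qavg]
    _ ≤ (∫ g, ‖f (g • x)‖ ∂lam) ^ 2 := by
      gcongr
      simpa only [hnorm] using norm_integral_le_integral_norm (fun g => ψ g⁻¹ (f (g • x)))
    _ ≤ ∫ g, ‖f (g • x)‖ ^ 2 ∂lam := sq_integral_le_integral_sq hfx

lemma congr_ae [SFinite lam] [SFinite μ]
    (hT : MeasurePreserving (fun p : X × G => p.2 • p.1) (μ.prod lam) μ)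
    {f' : X → EuclideanSpace ℝ (Fin k)} (hff' : f =ᵐ[μ] f') :
    Qavg lam ψ f =ᵐ[μ] Qavg lam ψ f' := by
  have hprod : ∀ᵐ p ∂(μ.prod lam), f (p.2 • p.1) = f' (p.2 • p.1) :=
    hT.quasiMeasurePreserving.ae_eq_comp hff'
  filter_upwards [Measure.ae_ae_of_ae_prod hprod] with x hx
  exact integral_congr_ae (hx.mono fun g hg => by simp only [hg])

lemma apply_smul [IsProbabilityMeasure lam] (hrinv : ∀ g : G, lam.map (fun h => h * g) = lam)
    (hT : MeasurePreserving (fun p : X × G => p.2 • p.1) (μ.prod lam) μ)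
    (hψ : Measurable fun p : G × EuclideanSpace ℝ (Fin k) => ψ p.1⁻¹ p.2)
    (hf : Measurable f) (g₀ : G) (x : X) :
    Qavg lam ψ f (g₀ • x) = ψ g₀ (Qavg lam ψ f x) := by
  -- right multiplication need not be measurable, but `hrinv` makes it a.e.-measurable
  have hmul : AEMeasurable (fun h => h * g₀⁻¹) lam :=
    .of_map_ne_zero (by rw [hrinv]; exact IsProbabilityMeasure.ne_zero lam)
  have horbit : Measurable fun g : G => g • g₀ • x :=
    hT.measurable.comp (measurable_const.prodMk measurable_id)
  have hint : Measurable fun g : G => ψ g⁻¹ (f (g • g₀ • x)) :=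
    hψ.comp (measurable_id.prodMk (hf.comp horbit))
  have hshift : ∀ h : G, ψ (h * g₀⁻¹)⁻¹ (f ((h * g₀⁻¹) • g₀ • x)) = ψ g₀ (ψ h⁻¹ (f (h • x))) :=
    fun h => by simp [smul_smul, mul_inv_rev, map_mul]
  calc Qavg lam ψ f (g₀ • x) = ∫ g, ψ g⁻¹ (f (g • g₀ • x)) ∂(lam.map (fun h => h * g₀⁻¹)) := by
        rw [hrinv]; rfl
    _ = ∫ h, ψ g₀ (ψ h⁻¹ (f (h • x))) ∂lam := by
        rw [integral_map hmul (by rw [hrinv]; exact hint.aestronglyMeasurable)]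
        simp_rw [hshift]
    _ = ψ g₀ (Qavg lam ψ f x) := (ψ g₀).toLinearIsometry.integral_comp_comm _

lemma integral_inner_eq_of_equivariant [SFinite lam] [IsFiniteMeasure μ]
    (hT : MeasurePreserving (fun p : X × G => p.2 • p.1) (μ.prod lam) μ)
    (hψ : Measurable fun p : G × EuclideanSpace ℝ (Fin k) => ψ p.1⁻¹ p.2)
    (hf : MemLp f 2 μ) {e : X → EuclideanSpace ℝ (Fin k)} (he : MemLp e 2 μ)
    (he_equiv : ∀ (g : G) (x : X), e (g • x) = ψ g (e x)) :
    ∫ x, ⟪e x, Qavg lam ψ f x⟫_ℝ ∂μ = ∫ x, ⟪e x, f x⟫_ℝ ∂μ := by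
  have hF := integrable_integrand hT hψ (hf.integrable one_le_two)
  calc ∫ x, ⟪e x, Qavg lam ψ f x⟫_ℝ ∂μ = ∫ x, ∫ g, ⟪e (g • x), f (g • x)⟫_ℝ ∂lam ∂μ := by
        refine integral_congr_ae (hF.prod_right_ae.mono fun x hx => ?_)
        simp_rw [Qavg, ← integral_inner hx, inner_map_inv_apply, he_equiv]
    _ = ∫ x, ⟪e x, f x⟫_ℝ ∂μ := integral_integral_comp_smul hT (he.integrable_inner hf)

lemma integral_inner_sub_sub_eq_zero [IsProbabilityMeasure lam] [IsFiniteMeasure μ]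
    (hrinv : ∀ g : G, lam.map (fun h => h * g) = lam)
    (hT : MeasurePreserving (fun p : X × G => p.2 • p.1) (μ.prod lam) μ)
    (hψ : Measurable fun p : G × EuclideanSpace ℝ (Fin k) => ψ p.1⁻¹ p.2)
    (hf : MemLp f 2 μ) {fstar : X → EuclideanSpace ℝ (Fin k)} (hfstar : MemLp fstar 2 μ)
    (hfstar_equiv : ∀ (g : G) (x : X), fstar (g • x) = ψ g (fstar x)) :
    ∫ x, ⟪fstar x - Qavg lam ψ f x, Qavg lam ψ f x - f x⟫_ℝ ∂μ = 0 := by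
  -- `𝒬 f` is equivariant everywhere only for measurable `f`, so pass to a representative
  set f' := hf.1.mk f
  have hf' : MemLp f' 2 μ := hf.ae_eq hf.1.ae_eq_mk
  have hQ := congr_ae (ψ := ψ) hT hf.1.ae_eq_mk
  have he : MemLp (fun x => Qavg lam ψ f' x - fstar x) 2 μ := (memLp_two hT hψ hf').sub hfstar
  have he_equiv : ∀ (g : G) (x : X),
      Qavg lam ψ f' (g • x) - fstar (g • x) = ψ g (Qavg lam ψ f' x - fstar x) := fun g x => by
    rw [apply_smul hrinv hT hψ hf.1.stronglyMeasurable_mk.measurable, hfstar_equiv, map_sub]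
  calc ∫ x, ⟪fstar x - Qavg lam ψ f x, Qavg lam ψ f x - f x⟫_ℝ ∂μ
      = ∫ x, ⟪Qavg lam ψ f' x - fstar x, f' x - Qavg lam ψ f' x⟫_ℝ ∂μ := by
        refine integral_congr_ae ?_
        filter_upwards [hf.1.ae_eq_mk, hQ] with x hfx hQx
        rw [hfx, hQx, ← inner_neg_neg, neg_sub, neg_sub]
    _ = 0 := by
        simp_rw [inner_sub_right]
        rw [integral_sub (he.integrable_inner hf') (he.integrable_inner (memLp_two hT hψ hf')),
          integral_inner_eq_of_equivariant hT hψ hf' he he_equiv, sub_self]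

lemma integral_norm_sub_sq_eq_add [IsProbabilityMeasure lam] [IsFiniteMeasure μ]
    (hrinv : ∀ g : G, lam.map (fun h => h * g) = lam)
    (hT : MeasurePreserving (fun p : X × G => p.2 • p.1) (μ.prod lam) μ)
    (hψ : Measurable fun p : G × EuclideanSpace ℝ (Fin k) => ψ p.1⁻¹ p.2)
    (hf : MemLp f 2 μ) {fstar : X → EuclideanSpace ℝ (Fin k)} (hfstar : MemLp fstar 2 μ)
    (hfstar_equiv : ∀ (g : G) (x : X), fstar (g • x) = ψ g (fstar x)) :
    ∫ x, ‖fstar x - f x‖ ^ 2 ∂μ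
      = ∫ x, ‖fstar x - Qavg lam ψ f x‖ ^ 2 ∂μ + ∫ x, ‖f x - Qavg lam ψ f x‖ ^ 2 ∂μ := by
  have hQ := memLp_two hT hψ hf
  have h := integral_norm_add_sq_of_integral_inner_eq_zero (u := fun x => fstar x - Qavg lam ψ f x)
    (w := fun x => Qavg lam ψ f x - f x) (hfstar.sub hQ) (hQ.sub hf)
    (integral_inner_sub_sub_eq_zero hrinv hT hψ hf hfstar hfstar_equiv)
  simp_rw [sub_add_sub_cancel, norm_sub_rev (Qavg lam ψ f _) (f _)] at h
  exact h

end Qavg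

theorem stmt7_general {G X Ω : Type*} [Group G] [MeasurableSpace G] [MeasurableSpace X]
    [MeasurableSpace Ω] [MulAction G X] {k : ℕ}
    (lam : Measure G) [IsProbabilityMeasure lam]
    (hrinv : ∀ g : G, lam.map (fun h => h * g) = lam)
    (ψ : G →* (EuclideanSpace ℝ (Fin k) ≃ₗᵢ[ℝ] EuclideanSpace ℝ (Fin k)))
    (hψ : Measurable fun p : G × EuclideanSpace ℝ (Fin k) => ψ p.1 p.2)
    (hact : Measurable fun p : G × X => p.1 • p.2)
    (μ : Measure X) [IsProbabilityMeasure μ]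
    (hμinv : ∀ g : G, μ.map (fun x => g • x) = μ)
    (P : Measure Ω) [IsProbabilityMeasure P]
    (Xr : Ω → X) (hXrm : Measurable Xr) (hXrlaw : P.map Xr = μ)
    (ξ : Ω → EuclideanSpace ℝ (Fin k))
    (hξ2 : MemLp ξ 2 P) (hξmean : ∫ ω, ξ ω ∂P = 0)
    (hindep : IndepFun Xr ξ P)
    (fstar : X → EuclideanSpace ℝ (Fin k)) (hfstar : MemLp fstar 2 μ)
    (hfstarEquiv : ∀ (g : G) (x : X), fstar (g • x) = ψ g (fstar x))
    (f : X → EuclideanSpace ℝ (Fin k)) (hf : MemLp f 2 μ) :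
    (∫ ω, ‖fstar (Xr ω) + ξ ω - f (Xr ω)‖ ^ 2 ∂P)
      - (∫ ω, ‖fstar (Xr ω) + ξ ω - Qavg lam ψ f (Xr ω)‖ ^ 2 ∂P)
      = ∫ x, ‖f x - Qavg lam ψ f x‖ ^ 2 ∂μ := by
  have hT := measurePreserving_smul_prod_s7 (lam := lam) hact hμinv
  have hψ' := measurable_map_inv_apply hψ
  have hgap : ∀ h : X → EuclideanSpace ℝ (Fin k), MemLp h 2 μ →
      ∫ ω, ‖fstar (Xr ω) + ξ ω - h (Xr ω)‖ ^ 2 ∂P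
        = ∫ x, ‖fstar x - h x‖ ^ 2 ∂μ + ∫ ω, ‖ξ ω‖ ^ 2 ∂P := fun h hh => by
    have hv : MemLp (fun x => fstar x - h x) 2 (P.map Xr) := hXrlaw ▸ hfstar.sub hh
    simp_rw [add_sub_right_comm]
    rw [integral_norm_comp_add_sq_of_indepFun hXrm.aemeasurable hξ2 hξmean hindep hv, hXrlaw]
  rw [hgap f hf, hgap _ (Qavg.memLp_two hT hψ' hf),
    Qavg.integral_norm_sub_sq_eq_add hrinv hT hψ' hf hfstar hfstarEquiv]
  ring

/-- Let `X ∼ μ` with `μ` a `𝒢`-invariant probability distribution, and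
`Y = f*(X) + ξ` with `ξ` independent of `X`, mean zero and finite variance, and `f*`
`𝒢`-equivariant. Then for any `f ∈ V`, the generalisation gap satisfies
`Δ(f, 𝒬f) := E‖Y − f(X)‖₂² − E‖Y − (𝒬f)(X)‖₂² = ‖f − 𝒬f‖_μ²`. -/
theorem stmt7 {G X Ω : Type*} [Group G] [MeasurableSpace G] [MeasurableSpace X]
    [MeasurableSpace Ω] [MulAction G X] {k : ℕ}
    (lam : Measure G) [IsProbabilityMeasure lam]
    (hlinv : ∀ g : G, lam.map (fun h => g * h) = lam)
    (hrinv : ∀ g : G, lam.map (fun h => h * g) = lam)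
    (ψ : G →* (EuclideanSpace ℝ (Fin k) ≃ₗᵢ[ℝ] EuclideanSpace ℝ (Fin k)))
    (hψ : Measurable fun p : G × EuclideanSpace ℝ (Fin k) => ψ p.1 p.2)
    (hact : Measurable fun p : G × X => p.1 • p.2)
    (μ : Measure X) [IsProbabilityMeasure μ]
    (hμinv : ∀ g : G, μ.map (fun x => g • x) = μ)
    (P : Measure Ω) [IsProbabilityMeasure P]
    (Xr : Ω → X) (hXrm : Measurable Xr) (hXrlaw : P.map Xr = μ)
    (ξ : Ω → EuclideanSpace ℝ (Fin k)) (hξm : Measurable ξ)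
    (hξ2 : MemLp ξ 2 P) (hξmean : ∫ ω, ξ ω ∂P = 0)
    (hindep : IndepFun Xr ξ P)
    (fstar : X → EuclideanSpace ℝ (Fin k)) (hfstar : MemLp fstar 2 μ)
    (hfstarEquiv : ∀ (g : G) (x : X), fstar (g • x) = ψ g (fstar x))
    (f : X → EuclideanSpace ℝ (Fin k)) (hf : MemLp f 2 μ) :
    (∫ ω, ‖fstar (Xr ω) + ξ ω - f (Xr ω)‖ ^ 2 ∂P)
      - (∫ ω, ‖fstar (Xr ω) + ξ ω - Qavg lam ψ f (Xr ω)‖ ^ 2 ∂P)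
      = ∫ x, ‖f x - Qavg lam ψ f x‖ ^ 2 ∂μ :=
  stmt7_general lam hrinv ψ hψ hact μ hμinv P Xr hXrm hXrlaw ξ hξ2 hξmean hindep fstar hfstar
    hfstarEquiv f hf
end

section
/- Let X ∼ μ where μ is a 𝒢-invariant distribution on ℝᵈ with Σ = E[XXᵀ] finite, and let ξ be a random element of ℝᵏ independent of X with E[ξ] = 0 and finite variance. Set Y = f_Θ(X) + ξ where f_Θ(x) = Θᵀx is 𝒢-equivariant. Then for any W ∈ ℝ^{d×k}, the generalisation gap satisfies Δ(f_W, f_{W̄}) := E[‖Y − f_W(X)‖₂²] − E[‖Y − f_{W̄}(X)‖₂²] = ‖Σ^{1/2} W^⊥‖_F², where W̄ = Ψ_𝒢(W) and W^⊥ = W − Ψ_𝒢(W). -/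
open Matrix MeasureTheory ProbabilityTheory

/-- The intertwining average `Ψ_𝒢(W) = ∫_𝒢 φ(g) W ψ(g⁻¹) dλ(g)` (defined entrywise). -/
noncomputable def PsiG {d k : ℕ} {G : Type*} [Group G] [MeasurableSpace G]
    (lam : Measure G)
    (φ : G →* Matrix.orthogonalGroup (Fin d) ℝ)
    (ψ : G →* Matrix.orthogonalGroup (Fin k) ℝ)
    (W : Matrix (Fin d) (Fin k) ℝ) : Matrix (Fin d) (Fin k) ℝ :=
  Matrix.of fun i j =>
    ∫ g, ((φ g : Matrix (Fin d) (Fin d) ℝ) * W * (ψ g⁻¹ : Matrix (Fin k) (Fin k) ℝ)) i j ∂lam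

open scoped ComplexOrder in
/-- The positive semidefinite square root of a positive semidefinite matrix (the definition
`Matrix.PosSemidef.sqrt` of the older Mathlib, since removed). -/
noncomputable def Matrix.PosSemidef.sqrt {n 𝕜 : Type*} [Fintype n] [DecidableEq n] [RCLike 𝕜]
    {A : Matrix n n 𝕜} (hA : A.PosSemidef) : Matrix n n 𝕜 :=
  (hA.1.eigenvectorUnitary : Matrix n n 𝕜) * diagonal ((↑) ∘ (fun x : ℝ => √x) ∘ hA.1.eigenvalues) *
    (star hA.1.eigenvectorUnitary : Matrix n n 𝕜)

/-! Both `Θ` (by equivariance) and `W̄ = Ψ_𝒢(W)` (by left invariance of `λ`) intertwine `φ`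
and `ψ`, and `Σ` commutes with every `φ(g)` because `μ` is invariant, so `Σ (Θ - W̄)` is an
intertwiner. Each conjugate `φ(g) W ψ(g)⁻¹` has the same trace pairing as `W` with an
intertwiner, hence so does their average `W̄`: this makes `W - W̄` orthogonal to `Θ - W̄` for the
form `tr(Aᵀ Σ B)`. Since the noise is centred and independent of `X`, the risk of `V` is
`tr((Θ - V)ᵀ Σ (Θ - V)) + E‖ξ‖²`, and expanding `Θ - W = (Θ - W̄) - (W - W̄)` gives the claim. -/

open scoped ComplexOrder in
lemma Matrix.PosSemidef.sqrt_mul_self {n 𝕜 : Type*} [Fintype n] [DecidableEq n] [RCLike 𝕜]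
    {A : Matrix n n 𝕜} (hA : A.PosSemidef) : hA.sqrt * hA.sqrt = A := by
  set U : Matrix n n 𝕜 := (hA.1.eigenvectorUnitary : Matrix n n 𝕜)
  have hU : star U * U = 1 := Matrix.UnitaryGroup.star_mul_self _
  have hD : diagonal ((↑) ∘ (fun x : ℝ => √x) ∘ hA.1.eigenvalues) *
      diagonal ((↑) ∘ (fun x : ℝ => √x) ∘ hA.1.eigenvalues) =
      (diagonal (RCLike.ofReal ∘ hA.1.eigenvalues) : Matrix n n 𝕜) := by
    rw [diagonal_mul_diagonal]
    congr 1
    funext i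
    simp [← RCLike.ofReal_mul, Real.mul_self_sqrt (hA.eigenvalues_nonneg i)]
  conv_rhs => rw [hA.1.spectral_theorem, Unitary.conjStarAlgAut_apply, ← hD]
  simp only [Matrix.PosSemidef.sqrt, Matrix.mul_assoc]
  rw [← Matrix.mul_assoc (star U) U, hU, Matrix.one_mul]

open scoped ComplexOrder in
lemma Matrix.PosSemidef.sqrt_isHermitian {n 𝕜 : Type*} [Fintype n] [DecidableEq n] [RCLike 𝕜]
    {A : Matrix n n 𝕜} (hA : A.PosSemidef) : hA.sqrt.IsHermitian := by
  refine isHermitian_mul_mul_conjTranspose _ (isHermitian_diagonal_of_self_adjoint _ ?_)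
  ext i
  simp

lemma Matrix.trace_transpose_mul_eq_sum {m n : Type*} [Fintype m] [Fintype n]
    (A B : Matrix m n ℝ) : (Aᵀ * B).trace = ∑ i, ∑ j, A i j * B i j := by
  simp only [trace, diag, mul_apply, transpose_apply]
  exact Finset.sum_comm

lemma Matrix.PosSemidef.sum_sq_sqrt_mul {m n : Type*} [Fintype m] [DecidableEq m] [Fintype n]
    {A : Matrix m m ℝ} (hA : A.PosSemidef) (M : Matrix m n ℝ) :
    ∑ i, ∑ j, ((hA.sqrt * M) i j) ^ 2 = (Mᵀ * (A * M)).trace := by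
  have hT : hA.sqrtᵀ = hA.sqrt := hA.sqrt_isHermitian
  conv_rhs => rw [← hA.sqrt_mul_self, Matrix.mul_assoc, ← Matrix.mul_assoc Mᵀ, ← hT,
    ← transpose_mul, trace_transpose_mul_eq_sum, hT]
  simp only [sq]

lemma Matrix.orthogonalGroup.transpose_mul_self {n : Type*} [Fintype n] [DecidableEq n]
    (U : Matrix.orthogonalGroup n ℝ) : (U : Matrix n n ℝ)ᵀ * U = 1 :=
  Matrix.UnitaryGroup.star_mul_self U

lemma Matrix.orthogonalGroup.abs_apply_le_one {n : Type*} [Fintype n] [DecidableEq n]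
    (U : Matrix.orthogonalGroup n ℝ) (i j : n) : |(U : Matrix n n ℝ) i j| ≤ 1 :=
  entry_norm_bound_of_unitary U.2 i j

lemma MeasureTheory.integral_sum_sum_mul {α m n : Type*} [MeasurableSpace α] {μ : Measure α}
    [Fintype m] [Fintype n] (c : m → n → ℝ) (f : α → m → n → ℝ)
    (hf : ∀ i j, Integrable (fun a => f a i j) μ) :
    ∫ a, ∑ i, ∑ j, c i j * f a i j ∂μ = ∑ i, ∑ j, c i j * ∫ a, f a i j ∂μ := by
  rw [integral_finsetSum _ fun i _ => integrable_finsetSum _ fun j _ => (hf i j).const_mul _]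
  refine Finset.sum_congr rfl fun i _ => ?_
  rw [integral_finsetSum _ fun j _ => (hf i j).const_mul _]
  simp only [integral_const_mul]

lemma Matrix.mul_mul_apply_eq_sum {l m n o : Type*} [Fintype m] [Fintype n]
    (A : Matrix l m ℝ) (M : Matrix m n ℝ) (B : Matrix n o ℝ) (i : l) (j : o) :
    (A * M * B) i j = ∑ a, ∑ b, (A i a * B b j) * M a b := by
  simp only [mul_apply, Finset.sum_mul]
  rw [Finset.sum_comm]
  exact Finset.sum_congr rfl fun _ _ => Finset.sum_congr rfl fun _ _ => by ring

namespace Matrix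

variable {G : Type*} [Group G] {m n o : Type*} [Fintype m] [DecidableEq m] [Fintype n]
  [DecidableEq n] [Fintype o] [DecidableEq o]

lemma coe_map_inv_eq_transpose (ρ : G →* orthogonalGroup m ℝ) (g : G) :
    (ρ g⁻¹ : Matrix m m ℝ) = (ρ g : Matrix m m ℝ)ᵀ := by
  rw [map_inv]
  rfl

lemma coe_map_inv_mul_coe_map (ρ : G →* orthogonalGroup m ℝ) (g : G) :
    (ρ g⁻¹ : Matrix m m ℝ) * ρ g = 1 := by
  rw [coe_map_inv_eq_transpose, orthogonalGroup.transpose_mul_self]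

def IsIntertwiner (ρ : G →* orthogonalGroup m ℝ) (σ : G →* orthogonalGroup n ℝ)
    (M : Matrix m n ℝ) : Prop :=
  ∀ g, (ρ g : Matrix m m ℝ) * M = M * (σ g : Matrix n n ℝ)

variable {ρ : G →* orthogonalGroup m ℝ} {σ : G →* orthogonalGroup n ℝ}
  {τ : G →* orthogonalGroup o ℝ}

lemma isIntertwiner_of_conj {M : Matrix m n ℝ}
    (h : ∀ g, (ρ g : Matrix m m ℝ) * M * (σ g⁻¹ : Matrix n n ℝ) = M) :
    IsIntertwiner ρ σ M := fun g => by
  conv_rhs => rw [← h g, Matrix.mul_assoc, coe_map_inv_mul_coe_map, Matrix.mul_one]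

lemma isIntertwiner_of_mulVec {M : Matrix m n ℝ}
    (h : ∀ g x, M *ᵥ ((σ g : Matrix n n ℝ) *ᵥ x) = (ρ g : Matrix m m ℝ) *ᵥ (M *ᵥ x)) :
    IsIntertwiner ρ σ M := fun g =>
  ext_of_mulVec_single fun j => by rw [← mulVec_mulVec, ← mulVec_mulVec, h]

lemma IsIntertwiner.transpose {M : Matrix m n ℝ} (hM : IsIntertwiner ρ σ M) :
    IsIntertwiner σ ρ Mᵀ := fun g => by
  have := congrArg (·ᵀ) (hM g⁻¹)
  simpa only [transpose_mul, coe_map_inv_eq_transpose, transpose_transpose] using this.symm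

lemma IsIntertwiner.sub {A B : Matrix m n ℝ} (hA : IsIntertwiner ρ σ A)
    (hB : IsIntertwiner ρ σ B) : IsIntertwiner ρ σ (A - B) := fun g => by
  rw [Matrix.mul_sub, Matrix.sub_mul, hA g, hB g]

lemma IsIntertwiner.mul {A : Matrix m n ℝ} {B : Matrix n o ℝ} (hA : IsIntertwiner ρ σ A)
    (hB : IsIntertwiner σ τ B) : IsIntertwiner ρ τ (A * B) := fun g => by
  rw [← Matrix.mul_assoc, hA g, Matrix.mul_assoc, hB g, Matrix.mul_assoc]

lemma IsIntertwiner.trace_transpose_conj_mul {N : Matrix m n ℝ} (hN : IsIntertwiner ρ σ N)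
    (W : Matrix m n ℝ) (g : G) :
    (((ρ g : Matrix m m ℝ) * W * (σ g⁻¹ : Matrix n n ℝ))ᵀ * N).trace = (Wᵀ * N).trace := by
  rw [coe_map_inv_eq_transpose, transpose_mul, transpose_mul, transpose_transpose,
    Matrix.mul_assoc, Matrix.mul_assoc, trace_mul_comm, Matrix.mul_assoc, Matrix.mul_assoc,
    ← hN g,
    ← Matrix.mul_assoc _ (ρ g : Matrix m m ℝ), orthogonalGroup.transpose_mul_self, Matrix.one_mul]

end Matrix

section PsiG

variable {d k : ℕ} {G : Type*} [Group G] [MeasurableSpace G] {lam : Measure G}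
  {φ : G →* Matrix.orthogonalGroup (Fin d) ℝ} {ψ : G →* Matrix.orthogonalGroup (Fin k) ℝ}

lemma integrable_conj_apply [IsFiniteMeasure lam]
    (hφ : ∀ i j, Measurable fun g => (φ g : Matrix (Fin d) (Fin d) ℝ) i j)
    (hψ : ∀ i j, Measurable fun g => (ψ g : Matrix (Fin k) (Fin k) ℝ) i j)
    (W : Matrix (Fin d) (Fin k) ℝ) (i : Fin d) (j : Fin k) :
    Integrable (fun g =>
      ((φ g : Matrix (Fin d) (Fin d) ℝ) * W * (ψ g⁻¹ : Matrix (Fin k) (Fin k) ℝ)) i j) lam := by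
  simp only [Matrix.mul_mul_apply_eq_sum, Matrix.coe_map_inv_eq_transpose, Matrix.transpose_apply]
  refine integrable_finsetSum _ fun a _ => integrable_finsetSum _ fun b _ =>
    Integrable.of_bound (((hφ i a).mul (hψ j b)).mul_const _).aestronglyMeasurable |W a b|
      (Filter.Eventually.of_forall fun g => ?_)
  rw [Real.norm_eq_abs, abs_mul, abs_mul]
  have hφ1 := Matrix.orthogonalGroup.abs_apply_le_one (φ g) i a
  have hψ1 := Matrix.orthogonalGroup.abs_apply_le_one (ψ g) j b
  calc |_| * |_| * |W a b| ≤ 1 * 1 * |W a b| := by gcongr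
    _ = |W a b| := by ring

lemma isIntertwiner_PsiG [IsProbabilityMeasure lam]
    (hlinv : ∀ g : G, lam.map (fun h => g * h) = lam)
    (hφ : ∀ i j, Measurable fun g => (φ g : Matrix (Fin d) (Fin d) ℝ) i j)
    (hψ : ∀ i j, Measurable fun g => (ψ g : Matrix (Fin k) (Fin k) ℝ) i j)
    (W : Matrix (Fin d) (Fin k) ℝ) : Matrix.IsIntertwiner φ ψ (PsiG lam φ ψ W) := by
  refine Matrix.isIntertwiner_of_conj fun h => ?_
  ext i j
  set F : G → Matrix (Fin d) (Fin k) ℝ :=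
    fun g => (φ g : Matrix (Fin d) (Fin d) ℝ) * W * (ψ g⁻¹ : Matrix (Fin k) (Fin k) ℝ)
  have hF : ∀ g, (φ h : Matrix (Fin d) (Fin d) ℝ) * F g * (ψ h⁻¹ : Matrix (Fin k) (Fin k) ℝ)
      = F (h * g) := fun g => by
    simp only [F, _root_.mul_inv_rev, map_mul, Matrix.UnitaryGroup.mul_val, Matrix.mul_assoc]
  have htransl : AEMeasurable (fun g => h * g) lam :=
    .of_map_ne_zero (by rw [hlinv h]; exact IsProbabilityMeasure.ne_zero lam)
  calc _ = ∫ g, ((φ h : Matrix (Fin d) (Fin d) ℝ) * F g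
          * (ψ h⁻¹ : Matrix (Fin k) (Fin k) ℝ)) i j ∂lam := by
        simp only [Matrix.mul_mul_apply_eq_sum]
        exact (integral_sum_sum_mul _ (fun g => F g) fun a b =>
          integrable_conj_apply hφ hψ W a b).symm
    _ = ∫ g, F g i j ∂(lam.map fun g => h * g) := by
        simp only [hF]
        refine (integral_map (f := fun g => F g i j) htransl ?_).symm
        rw [hlinv h]
        exact (integrable_conj_apply hφ hψ W i j).aestronglyMeasurable
    _ = PsiG lam φ ψ W i j := by rw [hlinv h]; rfl

lemma trace_transpose_PsiG_mul [IsProbabilityMeasure lam]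
    (hφ : ∀ i j, Measurable fun g => (φ g : Matrix (Fin d) (Fin d) ℝ) i j)
    (hψ : ∀ i j, Measurable fun g => (ψ g : Matrix (Fin k) (Fin k) ℝ) i j)
    {N : Matrix (Fin d) (Fin k) ℝ} (hN : Matrix.IsIntertwiner φ ψ N)
    (W : Matrix (Fin d) (Fin k) ℝ) :
    ((PsiG lam φ ψ W)ᵀ * N).trace = (Wᵀ * N).trace := by
  calc _ = ∫ g, (((φ g : Matrix (Fin d) (Fin d) ℝ) * W
          * (ψ g⁻¹ : Matrix (Fin k) (Fin k) ℝ))ᵀ * N).trace ∂lam := by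
        simp only [Matrix.trace_transpose_mul_eq_sum, mul_comm _ (N _ _)]
        exact (integral_sum_sum_mul _ (fun g => (φ g : Matrix (Fin d) (Fin d) ℝ) * W *
          (ψ g⁻¹ : Matrix (Fin k) (Fin k) ℝ)) fun a b => integrable_conj_apply hφ hψ W a b).symm
    _ = (Wᵀ * N).trace := by simp only [hN.trace_transpose_conj_mul W]; simp

end PsiG

section SecondMoment

variable {m n : Type*} [Fintype m] [Fintype n]

lemma mul_mul_transpose_eq_of_map_mulVec (μ : Measure (m → ℝ))
    (hmom : ∀ i j, Integrable (fun x => x i * x j) μ)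
    (S : Matrix m m ℝ) (hS : ∀ i j, S i j = ∫ x, x i * x j ∂μ)
    {U : Matrix m m ℝ} (hU : μ.map (fun x => U *ᵥ x) = μ) : U * S * Uᵀ = S := by
  ext i i'
  calc (U * S * Uᵀ) i i' = ∑ a, ∑ b, (U i a * U i' b) * ∫ x, x a * x b ∂μ := by
        simp only [Matrix.mul_mul_apply_eq_sum, Matrix.transpose_apply, hS]
    _ = ∫ x, ∑ a, ∑ b, (U i a * U i' b) * (x a * x b) ∂μ :=
        (integral_sum_sum_mul _ (fun (x : m → ℝ) a b => x a * x b) hmom).symm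
    _ = ∫ x, (U *ᵥ x) i * (U *ᵥ x) i' ∂μ := by
        congr 1 with x
        simp only [Matrix.mulVec, dotProduct, Finset.sum_mul_sum]
        exact Finset.sum_congr rfl fun a _ => Finset.sum_congr rfl fun b _ => by ring
    _ = ∫ x, x i * x i' ∂(μ.map fun x => U *ᵥ x) :=
        (integral_map (f := fun x : m → ℝ => x i * x i')
          (continuous_const.matrix_mulVec continuous_id).aemeasurable (by fun_prop)).symm
    _ = S i i' := by rw [hU, hS]

lemma isIntertwiner_secondMoment [DecidableEq m] {G : Type*} [Group G]
    (φ : G →* Matrix.orthogonalGroup m ℝ) (μ : Measure (m → ℝ))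
    (hμinv : ∀ g : G, μ.map (fun x => (φ g : Matrix m m ℝ) *ᵥ x) = μ)
    (hmom : ∀ i j, Integrable (fun x => x i * x j) μ)
    (S : Matrix m m ℝ) (hS : ∀ i j, S i j = ∫ x, x i * x j ∂μ) :
    Matrix.IsIntertwiner φ φ S :=
  Matrix.isIntertwiner_of_conj fun g => by
    rw [Matrix.coe_map_inv_eq_transpose]
    exact mul_mul_transpose_eq_of_map_mulVec μ hmom S hS (hμinv g)

end SecondMoment

section Risk

variable {m n : Type*} [Fintype m] [Fintype n]

lemma sum_sq_mulVec_add_sub_mulVec (Θ V : Matrix m n ℝ) (x : m → ℝ) (e : n → ℝ) :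
    ∑ j, ((Θᵀ *ᵥ x) j + e j - (Vᵀ *ᵥ x) j) ^ 2
      = ∑ a, ∑ b, (∑ j, (Θ - V) a j * (Θ - V) b j) * (x a * x b)
        + ∑ a, ∑ j, (2 * (Θ - V) a j) * (x a * e j) + ∑ j, e j ^ 2 := by
  set C := Θ - V
  have hC : ∀ j, (Θᵀ *ᵥ x) j - (Vᵀ *ᵥ x) j = ∑ a, C a j * x a := fun j => by
    simp only [C, Matrix.mulVec, dotProduct, Matrix.transpose_apply, Matrix.sub_apply,
      ← Finset.sum_sub_distrib, sub_mul]
  calc _ = ∑ j, ((∑ a, C a j * x a) ^ 2 + 2 * (∑ a, C a j * x a) * e j + e j ^ 2) :=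
        Finset.sum_congr rfl fun j _ => by rw [← hC]; ring
    _ = _ := by
        simp only [Finset.sum_add_distrib, sq, Finset.mul_sum, Finset.sum_mul]
        congr 2
        · rw [Finset.sum_congr rfl fun _ _ => Finset.sum_comm, Finset.sum_comm]
          refine Finset.sum_congr rfl fun a _ => ?_
          rw [Finset.sum_comm]
          exact Finset.sum_congr rfl fun b _ => Finset.sum_congr rfl fun j _ => by ring
        · rw [Finset.sum_comm]
          exact Finset.sum_congr rfl fun a _ => Finset.sum_congr rfl fun j _ => by ring

lemma Matrix.trace_transpose_mul_mul_eq_sum (C : Matrix m n ℝ) (S : Matrix m m ℝ) :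
    (Cᵀ * (S * C)).trace = ∑ a, ∑ b, (∑ j, C a j * C b j) * S a b := by
  rw [← Matrix.mul_assoc, Matrix.trace_mul_comm, ← Matrix.mul_assoc]
  simp only [Matrix.trace, Matrix.diag, Matrix.mul_apply, Matrix.transpose_apply, Finset.sum_mul]
  rw [Finset.sum_comm]
  exact Finset.sum_congr rfl fun _ _ => Finset.sum_congr rfl fun _ _ =>
    Finset.sum_congr rfl fun _ _ => by ring

variable {Ω : Type*} [MeasurableSpace Ω] {P : Measure Ω} [IsFiniteMeasure P]

lemma integrable_of_integrable_sq {f : Ω → ℝ} (hf : AEStronglyMeasurable f P)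
    (hf2 : Integrable (fun ω => f ω ^ 2) P) : Integrable f P :=
  ((memLp_two_iff_integrable_sq hf).mpr hf2).integrable one_le_two

lemma integral_sum_sq_error_eq (μ : Measure (m → ℝ))
    (hmom : ∀ i j, Integrable (fun x => x i * x j) μ)
    (S : Matrix m m ℝ) (hS : ∀ i j, S i j = ∫ x, x i * x j ∂μ)
    {X : Ω → m → ℝ} (hXm : Measurable X) (hXlaw : P.map X = μ)
    {ξ : Ω → n → ℝ} (hξm : Measurable ξ) (hmean : ∀ j, ∫ ω, ξ ω j ∂P = 0)
    (hvar : ∀ j, Integrable (fun ω => (ξ ω j) ^ 2) P) (hindep : IndepFun X ξ P)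
    (Θ V : Matrix m n ℝ) :
    ∫ ω, ∑ j, ((Θᵀ *ᵥ X ω) j + ξ ω j - (Vᵀ *ᵥ X ω) j) ^ 2 ∂P
      = ((Θ - V)ᵀ * (S * (Θ - V))).trace + ∫ ω, ∑ j, (ξ ω j) ^ 2 ∂P := by
  subst hXlaw
  have hXX : ∀ a b, Integrable (fun ω => X ω a * X ω b) P := fun a b =>
    (integrable_map_measure (by fun_prop) hXm.aemeasurable).mp (hmom a b)
  have hXXS : ∀ a b, ∫ ω, X ω a * X ω b ∂P = S a b := fun a b => by
    rw [hS, integral_map hXm.aemeasurable (by fun_prop)]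
  have hX : ∀ a, Integrable (fun ω => X ω a) P := fun a =>
    integrable_of_integrable_sq (by fun_prop) ((hXX a a).congr (.of_forall fun ω => by ring))
  have hξ : ∀ j, Integrable (fun ω => ξ ω j) P := fun j =>
    integrable_of_integrable_sq (by fun_prop) (hvar j)
  have hXξ : ∀ a j, IndepFun (fun ω => X ω a) (fun ω => ξ ω j) P := fun a j =>
    hindep.comp (measurable_pi_apply a) (measurable_pi_apply j)
  have hXξint : ∀ a j, Integrable (fun ω => X ω a * ξ ω j) P := fun a j =>
    (hXξ a j).integrable_mul (hX a) (hξ j)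
  have hXξ0 : ∀ a j, ∫ ω, X ω a * ξ ω j ∂P = 0 := fun a j => by
    rw [(hXξ a j).integral_fun_mul_eq_mul_integral (hX a).1 (hξ j).1, hmean j, mul_zero]
  simp only [sum_sq_mulVec_add_sub_mulVec]
  rw [integral_add, integral_add, integral_sum_sum_mul _ (fun ω a b => X ω a * X ω b) hXX,
    integral_sum_sum_mul _ (fun ω a j => X ω a * ξ ω j) hXξint]
  · simp only [hXXS, hXξ0, mul_zero, Finset.sum_const_zero, add_zero,
      ← Matrix.trace_transpose_mul_mul_eq_sum]
  all_goals fun_prop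

end Risk

lemma Matrix.IsSymm.trace_transpose_sub_mul_mul_sub {m n : Type*} [Fintype m] [Fintype n]
    {S : Matrix m m ℝ} (hS : S.IsSymm) (A B : Matrix m n ℝ) :
    ((B - A)ᵀ * (S * (B - A))).trace
      = (Bᵀ * (S * B)).trace - 2 * (Aᵀ * (S * B)).trace + (Aᵀ * (S * A)).trace := by
  have hBA : (Bᵀ * (S * A)).trace = (Aᵀ * (S * B)).trace := by
    rw [← trace_transpose, transpose_mul, transpose_mul, transpose_transpose, hS.eq,
      Matrix.mul_assoc]
  simp only [transpose_sub, Matrix.mul_sub, Matrix.sub_mul, trace_sub, hBA]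
  ring

theorem stmt13_general {d k : ℕ} {G Ω : Type*} [Group G] [MeasurableSpace G] [MeasurableSpace Ω]
    (lam : Measure G) [IsProbabilityMeasure lam]
    (hlinv : ∀ g : G, lam.map (fun h => g * h) = lam)
    (φ : G →* Matrix.orthogonalGroup (Fin d) ℝ)
    (ψ : G →* Matrix.orthogonalGroup (Fin k) ℝ)
    (hφ : ∀ i j, Measurable fun g => (φ g : Matrix (Fin d) (Fin d) ℝ) i j)
    (hψ : ∀ i j, Measurable fun g => (ψ g : Matrix (Fin k) (Fin k) ℝ) i j)
    (μ : Measure (Fin d → ℝ))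
    (hμinv : ∀ g : G, μ.map (fun x => (φ g : Matrix (Fin d) (Fin d) ℝ) *ᵥ x) = μ)
    (hmom : ∀ i j : Fin d, Integrable (fun x => x i * x j) μ)
    (Sig : Matrix (Fin d) (Fin d) ℝ)
    (hSig : ∀ i j : Fin d, Sig i j = ∫ x, x i * x j ∂μ)
    (hpsd : Sig.PosSemidef)
    (P : Measure Ω) [IsProbabilityMeasure P]
    (Xr : Ω → Fin d → ℝ) (hXrm : Measurable Xr) (hXrlaw : P.map Xr = μ)
    (ξ : Ω → Fin k → ℝ) (hξm : Measurable ξ)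
    (hmean : ∀ j, ∫ ω, ξ ω j ∂P = 0)
    (hvar : ∀ j, Integrable (fun ω => (ξ ω j) ^ 2) P)
    (hindep : IndepFun Xr ξ P)
    (Θ : Matrix (Fin d) (Fin k) ℝ)
    (hequiv : ∀ (g : G) (x : Fin d → ℝ),
      Θᵀ *ᵥ ((φ g : Matrix (Fin d) (Fin d) ℝ) *ᵥ x)
        = (ψ g : Matrix (Fin k) (Fin k) ℝ) *ᵥ (Θᵀ *ᵥ x))
    (W : Matrix (Fin d) (Fin k) ℝ) :
    (∫ ω, ∑ j, ((Θᵀ *ᵥ Xr ω) j + ξ ω j - (Wᵀ *ᵥ Xr ω) j) ^ 2 ∂P)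
      - (∫ ω, ∑ j, ((Θᵀ *ᵥ Xr ω) j + ξ ω j - ((PsiG lam φ ψ W)ᵀ *ᵥ Xr ω) j) ^ 2 ∂P)
      = ∑ i, ∑ j, ((hpsd.sqrt * (W - PsiG lam φ ψ W)) i j) ^ 2 := by
  set Wbar := PsiG lam φ ψ W
  have hSigφ : Sig.IsIntertwiner φ φ := isIntertwiner_secondMoment φ μ hμinv hmom Sig hSig
  have hΘ : Θ.IsIntertwiner φ ψ :=
    Θ.transpose_transpose ▸ (isIntertwiner_of_mulVec hequiv).transpose
  have hB : (Θ - Wbar).IsIntertwiner φ ψ := hΘ.sub (isIntertwiner_PsiG hlinv hφ hψ W)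
  have hcross : ((W - Wbar)ᵀ * (Sig * (Θ - Wbar))).trace = 0 := by
    rw [transpose_sub, Matrix.sub_mul, trace_sub, trace_transpose_PsiG_mul hφ hψ (hSigφ.mul hB),
      sub_self]
  rw [integral_sum_sq_error_eq μ hmom Sig hSig hXrm hXrlaw hξm hmean hvar hindep,
    integral_sum_sq_error_eq μ hmom Sig hSig hXrm hXrlaw hξm hmean hvar hindep,
    hpsd.sum_sq_sqrt_mul, show Θ - W = (Θ - Wbar) - (W - Wbar) by abel,
    (isHermitian_iff_isSymm.mp hpsd.isHermitian).trace_transpose_sub_mul_mul_sub, hcross]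
  ring

/-- Let `X ∼ μ` with `μ` a `𝒢`-invariant distribution on `ℝᵈ` with
`Σ = E[XXᵀ]` finite, and let `ξ ∈ ℝᵏ` be independent of `X` with mean `0` and finite variance.
Set `Y = Θᵀ X + ξ` where `f_Θ(x) = Θᵀ x` is `𝒢`-equivariant. Then for any `W ∈ ℝ^{d×k}`,
`Δ(f_W, f_W̄) := E‖Y − Wᵀ X‖₂² − E‖Y − W̄ᵀ X‖₂² = ‖Σ^{1/2} W^⊥‖_F²`, where `W̄ = Ψ_𝒢(W)` and
`W^⊥ = W − Ψ_𝒢(W)`. -/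
theorem stmt13 {d k : ℕ} {G Ω : Type*} [Group G] [MeasurableSpace G] [MeasurableSpace Ω]
    (lam : Measure G) [IsProbabilityMeasure lam]
    (hlinv : ∀ g : G, lam.map (fun h => g * h) = lam)
    (hrinv : ∀ g : G, lam.map (fun h => h * g) = lam)
    (φ : G →* Matrix.orthogonalGroup (Fin d) ℝ)
    (ψ : G →* Matrix.orthogonalGroup (Fin k) ℝ)
    (hφ : ∀ i j, Measurable fun g => (φ g : Matrix (Fin d) (Fin d) ℝ) i j)
    (hψ : ∀ i j, Measurable fun g => (ψ g : Matrix (Fin k) (Fin k) ℝ) i j)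
    (μ : Measure (Fin d → ℝ)) [IsProbabilityMeasure μ]
    (hμinv : ∀ g : G, μ.map (fun x => (φ g : Matrix (Fin d) (Fin d) ℝ) *ᵥ x) = μ)
    (hmom : ∀ i j : Fin d, Integrable (fun x => x i * x j) μ)
    (Sig : Matrix (Fin d) (Fin d) ℝ)
    (hSig : ∀ i j : Fin d, Sig i j = ∫ x, x i * x j ∂μ)
    (hpsd : Sig.PosSemidef)
    (P : Measure Ω) [IsProbabilityMeasure P]
    (Xr : Ω → Fin d → ℝ) (hXrm : Measurable Xr) (hXrlaw : P.map Xr = μ)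
    (ξ : Ω → Fin k → ℝ) (hξm : Measurable ξ)
    (hmean : ∀ j, ∫ ω, ξ ω j ∂P = 0)
    (hvar : ∀ j, Integrable (fun ω => (ξ ω j) ^ 2) P)
    (hindep : IndepFun Xr ξ P)
    (Θ : Matrix (Fin d) (Fin k) ℝ)
    (hequiv : ∀ (g : G) (x : Fin d → ℝ),
      Θᵀ *ᵥ ((φ g : Matrix (Fin d) (Fin d) ℝ) *ᵥ x)
        = (ψ g : Matrix (Fin k) (Fin k) ℝ) *ᵥ (Θᵀ *ᵥ x))
    (W : Matrix (Fin d) (Fin k) ℝ) :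
    (∫ ω, ∑ j, ((Θᵀ *ᵥ Xr ω) j + ξ ω j - (Wᵀ *ᵥ Xr ω) j) ^ 2 ∂P)
      - (∫ ω, ∑ j, ((Θᵀ *ᵥ Xr ω) j + ξ ω j - ((PsiG lam φ ψ W)ᵀ *ᵥ Xr ω) j) ^ 2 ∂P)
      = ∑ i, ∑ j, ((hpsd.sqrt * (W - PsiG lam φ ψ W)) i j) ^ 2 :=
  stmt13_general lam hlinv φ ψ hφ hψ μ hμinv hmom Sig hSig hpsd P Xr hXrm hXrlaw ξ hξm hmean hvar
    hindep Θ hequiv W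
end

section
/- Let 0 < n < d, let P₀ ∈ ℝ^{d×d} be a fixed orthogonal projection of rank n, let R be distributed according to the Haar probability measure on the orthogonal group O(d), and set P = R P₀ Rᵀ (so that the range of P is a uniformly distributed n-dimensional subspace of ℝᵈ). Then for all indices a, b, c, e ∈ {1,…,d}: E[P_{ab} P_{ce}] = β(δ_{ab}δ_{ce} + δ_{ac}δ_{be} + δ_{ae}δ_{bc}) + (n(n−1)/(d(d−1))) δ_{ab}δ_{ce}, where β = n(d−n)/(d(d−1)(d+2)) and δ is the Kronecker delta. -/
open Matrix MeasureTheory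

instance matrixMeasurableSpace {m n α : Type*} [MeasurableSpace α] :
    MeasurableSpace (Matrix m n α) :=
  MeasurableSpace.pi

/-!
Write `T a b c e = E[P_ab P_ce]`. Left invariance of `μ` makes the law of `P` invariant under
`P ↦ Q P Qᵀ` for every orthogonal `Q`, so `T` is an `O(d)`-invariant 4-tensor, symmetric within
each index pair because `P` is. Sign changes of coordinates kill every entry in which some index
occurs once, and permutations of coordinates leave only the constants `T₀₀₀₀`, `T₀₀₁₁`, `T₀₁₀₁`.
Conjugating by one reflection that is not a signed permutation (a Householder matrix with a row
`(7/25, -24/25, 0, …)`) forces `T₀₀₀₀ = T₀₀₁₁ + 2 T₀₁₀₁`, so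
`T = A δ_ab δ_ce + B (δ_ac δ_be + δ_ae δ_bc)`. The two contractions
`∑ T_aacc = E[(tr P)²] = n²` and `∑ T_abba = E[tr P²] = n` then determine `A` and `B`.
-/

instance Matrix.borelSpace {m n α : Type*} [Countable m] [Countable n] [TopologicalSpace α]
    [MeasurableSpace α] [BorelSpace α] [SecondCountableTopology α] :
    BorelSpace (Matrix m n α) :=
  inferInstanceAs (BorelSpace (m → n → α))

section Conjugation

variable {ι : Type*} [Fintype ι]

lemma conj_apply_eq_sum (Q M : Matrix ι ι ℝ) (i j : ι) :
    (Q * M * Qᵀ) i j = ∑ a, ∑ b, Q i a * Q j b * M a b := by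
  simp only [mul_apply, transpose_apply, Finset.sum_mul]
  rw [Finset.sum_comm]
  exact Finset.sum_congr rfl fun _ _ => Finset.sum_congr rfl fun _ _ => by ring

lemma conj_apply_mul_conj_apply (Q M : Matrix ι ι ℝ) (i j k l : ι) :
    (Q * M * Qᵀ) i j * (Q * M * Qᵀ) k l =
      ∑ a, ∑ b, ∑ c, ∑ e, Q i a * Q j b * Q k c * Q l e * (M a b * M c e) := by
  simp only [conj_apply_eq_sum, Finset.sum_mul]
  simp only [Finset.mul_sum]
  exact Finset.sum_congr rfl fun _ _ => Finset.sum_congr rfl fun _ _ =>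
    Finset.sum_congr rfl fun _ _ => Finset.sum_congr rfl fun _ _ => by ring

variable [DecidableEq ι]

lemma abs_conj_apply_le {Q : Matrix ι ι ℝ} (hQ : Q ∈ orthogonalGroup ι ℝ) (M : Matrix ι ι ℝ)
    (i j : ι) : |(Q * M * Qᵀ) i j| ≤ ∑ a, ∑ b, |M a b| := by
  have hQ1 (i a : ι) : |Q i a| ≤ 1 := entry_norm_bound_of_unitary hQ i a
  rw [conj_apply_eq_sum]
  refine (Finset.abs_sum_le_sum_abs _ _).trans <| Finset.sum_le_sum fun a _ =>
    (Finset.abs_sum_le_sum_abs _ _).trans <| Finset.sum_le_sum fun b _ => ?_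
  rw [abs_mul, abs_mul]
  exact mul_le_of_le_one_left (abs_nonneg _) (mul_le_one₀ (hQ1 i a) (abs_nonneg _) (hQ1 j b))

lemma diagonal_mem_orthogonalGroup {s : ι → ℝ} (hs : ∀ i, s i * s i = 1) :
    diagonal s ∈ orthogonalGroup ι ℝ := by
  rw [mem_orthogonalGroup_iff, diagonal_transpose, diagonal_mul_diagonal, funext hs, diagonal_one]

lemma permMatrix_mem_orthogonalGroup (σ : Equiv.Perm ι) :
    σ.permMatrix ℝ ∈ orthogonalGroup ι ℝ := by
  rw [mem_orthogonalGroup_iff, transpose_permMatrix, ← permMatrix_mul, inv_mul_cancel,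
    permMatrix_one]

def householder {R : Type*} [CommRing R] (v : ι → R) : Matrix ι ι R :=
  1 - (2 : R) • vecMulVec v v

lemma householder_mem_orthogonalGroup {R : Type*} [CommRing R] {v : ι → R} (hv : v ⬝ᵥ v = 1) :
    householder v ∈ orthogonalGroup ι R := by
  rw [mem_orthogonalGroup_iff]
  simp only [householder, transpose_sub, transpose_one, transpose_smul, transpose_vecMulVec,
    sub_mul, mul_sub, one_mul, mul_one, smul_mul_smul_comm, vecMulVec_mul_vecMulVec, hv, one_smul]
  module

end Conjugation

noncomputable def secondMoment {ι : Type*} (ν : Measure (Matrix ι ι ℝ)) (a b c e : ι) : ℝ :=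
  ∫ M, M a b * M c e ∂ν

def isotropicTensor {ι : Type*} [DecidableEq ι] (A B : ℝ) (a b c e : ι) : ℝ :=
  A * ((if a = b then 1 else 0) * (if c = e then 1 else 0)) +
    B * ((if a = c then 1 else 0) * (if b = e then 1 else 0) +
      (if a = e then 1 else 0) * (if b = c then 1 else 0))

def IsOrthConjInvariant {ι : Type*} [Fintype ι] [DecidableEq ι] (ν : Measure (Matrix ι ι ℝ)) :
    Prop :=
  ∀ Q ∈ orthogonalGroup ι ℝ, ν.map (fun M => Q * M * Qᵀ) = ν

section SecondMoment

variable {ι : Type*} {ν : Measure (Matrix ι ι ℝ)}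

lemma secondMoment_comm (a b c e : ι) : secondMoment ν a b c e = secondMoment ν c e a b := by
  simp only [secondMoment, mul_comm]

lemma secondMoment_swap_left (hsymm : ∀ᵐ M ∂ν, Mᵀ = M) (a b c e : ι) :
    secondMoment ν a b c e = secondMoment ν b a c e :=
  integral_congr_ae <| hsymm.mono fun M hM => by simp only [← congrFun₂ hM a b, transpose_apply]

lemma secondMoment_swap_right (hsymm : ∀ᵐ M ∂ν, Mᵀ = M) (a b c e : ι) :
    secondMoment ν a b c e = secondMoment ν a b e c := by
  rw [secondMoment_comm, secondMoment_swap_left hsymm, secondMoment_comm]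

variable [Fintype ι] [IsProbabilityMeasure ν]
    (hint : ∀ a b c e, Integrable (fun M : Matrix ι ι ℝ => M a b * M c e) ν)
include hint

lemma sum_secondMoment_diag_diag {t : ℝ} (ht : ∀ᵐ M ∂ν, M.trace = t) :
    ∑ a, ∑ c, secondMoment ν a a c c = t ^ 2 := calc
  _ = ∫ M, M.trace ^ 2 ∂ν := by
    simp only [secondMoment, trace, diag, sq, Finset.sum_mul_sum]
    rw [integral_finsetSum _ fun a _ => by fun_prop]
    exact Finset.sum_congr rfl fun a _ => (integral_finsetSum _ fun c _ => hint a a c c).symm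
  _ = ∫ _, t ^ 2 ∂ν := integral_congr_ae (ht.mono fun M hM => by simp only [hM])
  _ = t ^ 2 := by simp

lemma sum_secondMoment_trace {t : ℝ} (ht : ∀ᵐ M ∂ν, (M * M).trace = t) :
    ∑ a, ∑ b, secondMoment ν a b b a = t := calc
  _ = ∫ M, (M * M).trace ∂ν := by
    simp only [secondMoment, trace, diag, mul_apply]
    rw [integral_finsetSum _ fun a _ => by fun_prop]
    exact Finset.sum_congr rfl fun a _ => (integral_finsetSum _ fun b _ => hint a b b a).symm
  _ = ∫ _, t ∂ν := integral_congr_ae (ht.mono fun M hM => by simp only [hM])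
  _ = t := by simp

end SecondMoment

section Invariance

variable {ι : Type*} [Fintype ι] [DecidableEq ι] {ν : Measure (Matrix ι ι ℝ)}
    (hν : IsOrthConjInvariant ν)
    (hint : ∀ a b c e, Integrable (fun M : Matrix ι ι ℝ => M a b * M c e) ν)
    (hsymm : ∀ᵐ M ∂ν, Mᵀ = M)
include hν hint

theorem secondMoment_eq_sum {Q : Matrix ι ι ℝ} (hQ : Q ∈ orthogonalGroup ι ℝ) (i j k l : ι) :
    secondMoment ν i j k l =
      ∑ a, ∑ b, ∑ c, ∑ e, Q i a * Q j b * Q k c * Q l e * secondMoment ν a b c e := by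
  have hconj : secondMoment ν i j k l = ∫ M, (Q * M * Qᵀ) i j * (Q * M * Qᵀ) k l ∂ν := by
    conv_lhs => rw [secondMoment, ← hν Q hQ]
    exact integral_map (by fun_prop) (by fun_prop)
  rw [hconj]
  simp only [conj_apply_mul_conj_apply, secondMoment]
  rw [integral_finsetSum _ fun a _ => by fun_prop]
  refine Finset.sum_congr rfl fun a _ => ?_
  rw [integral_finsetSum _ fun b _ => by fun_prop]
  refine Finset.sum_congr rfl fun b _ => ?_
  rw [integral_finsetSum _ fun c _ => by fun_prop]
  refine Finset.sum_congr rfl fun c _ => ?_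
  rw [integral_finsetSum _ fun e _ => by fun_prop]
  exact Finset.sum_congr rfl fun e _ => integral_const_mul _ _

theorem secondMoment_eq_signs_mul {s : ι → ℝ} (hs : ∀ i, s i * s i = 1) (a b c e : ι) :
    secondMoment ν a b c e = s a * s b * s c * s e * secondMoment ν a b c e := by
  conv_lhs => rw [secondMoment_eq_sum hν hint (diagonal_mem_orthogonalGroup hs)]
  simp [diagonal_apply]

theorem secondMoment_perm (σ : Equiv.Perm ι) (a b c e : ι) :
    secondMoment ν (σ a) (σ b) (σ c) (σ e) = secondMoment ν a b c e := by
  rw [secondMoment_eq_sum hν hint (permMatrix_mem_orthogonalGroup σ⁻¹)]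
  simp [PEquiv.toMatrix_apply]

theorem secondMoment_eq_zero_of_ne {a b c e : ι} (hb : a ≠ b) (hc : a ≠ c) (he : a ≠ e) :
    secondMoment ν a b c e = 0 := by
  have h := secondMoment_eq_signs_mul hν hint (s := fun i => if i = a then -1 else 1)
    (fun i => by split_ifs <;> norm_num) a b c e
  simp only [if_true, if_neg hb.symm, if_neg hc.symm, if_neg he.symm] at h
  linarith

theorem secondMoment_pairs_eq {I J x y : ι} (hIJ : I ≠ J) (hxy : x ≠ y) :
    secondMoment ν x x y y = secondMoment ν I I J J ∧
      secondMoment ν x y x y = secondMoment ν I J I J := by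
  obtain ⟨σ, hσ⟩ := Equiv.Perm.exists_extending_pair _ _
    (Function.Embedding.embFinTwo hIJ).injective (Function.Embedding.embFinTwo hxy).injective
  have hI : σ I = x := hσ 0
  have hJ : σ J = y := hσ 1
  rw [← hI, ← hJ, secondMoment_perm hν hint, secondMoment_perm hν hint]
  exact ⟨rfl, rfl⟩

include hsymm

theorem secondMoment_perms_eq_zero_of_ne {a b c e : ι} (hb : a ≠ b) (hc : a ≠ c) (he : a ≠ e) :
    secondMoment ν a b c e = 0 ∧ secondMoment ν b a c e = 0 ∧
      secondMoment ν c e a b = 0 ∧ secondMoment ν c e b a = 0 := by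
  have h := secondMoment_eq_zero_of_ne hν hint hb hc he
  refine ⟨h, ?_, ?_, ?_⟩
  · rwa [← secondMoment_swap_left hsymm]
  · rwa [secondMoment_comm]
  · rwa [secondMoment_comm, ← secondMoment_swap_left hsymm]

theorem secondMoment_eq_isotropicTensor_add {I J : ι} (hIJ : I ≠ J) (a b c e : ι) :
    secondMoment ν a b c e =
      isotropicTensor (secondMoment ν I I J J) (secondMoment ν I J I J) a b c e +
        (secondMoment ν I I I I - secondMoment ν I I J J - 2 * secondMoment ν I J I J) *
          ((if a = b then 1 else 0) * (if a = c then 1 else 0) * (if a = e then 1 else 0)) := by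
  have hdiag (x : ι) : secondMoment ν x x x x = secondMoment ν I I I I := by
    simpa using secondMoment_perm hν hint (Equiv.swap I x) I I I I
  have hpairs {x y : ι} (hxy : x ≠ y) := secondMoment_pairs_eq hν hint hIJ hxy
  have hzero {x y z w : ι} (hy : x ≠ y) (hz : x ≠ z) (hw : x ≠ w) :=
    secondMoment_perms_eq_zero_of_ne hν hint hsymm hy hz hw
  rcases eq_or_ne a b with rfl | hab
  · rcases eq_or_ne a c with rfl | hac
    · rcases eq_or_ne a e with rfl | hae
      · simp only [hdiag, isotropicTensor, ↓reduceIte, mul_one]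
        ring
      · simp [isotropicTensor, hae, (hzero hae.symm hae.symm hae.symm).2.2.2]
    · rcases eq_or_ne c e with rfl | hce
      · simp [isotropicTensor, hac, (hpairs hac).1]
      · simp [isotropicTensor, hac, hce, (hzero hce hac.symm hac.symm).2.2.1]
  · rcases eq_or_ne a c with rfl | hac
    · rcases eq_or_ne b e with rfl | hbe
      · simp [isotropicTensor, hab, Ne.symm hab, (hpairs hab).2]
      · simp [isotropicTensor, hab, Ne.symm hab, hbe, (hzero hab.symm hab.symm hbe).2.1]
    · rcases eq_or_ne a e with rfl | hae
      · rcases eq_or_ne b c with rfl | hbc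
        · simp [isotropicTensor, hab, Ne.symm hab, secondMoment_swap_right hsymm a b b a,
            (hpairs hab).2]
        · simp [isotropicTensor, hab, hac, hbc, (hzero hab.symm hbc hab.symm).2.1]
      · simp [isotropicTensor, hab, hac, hae, (hzero hab hac hae).1]

end Invariance

section Contractions

variable {ι : Type*} [Fintype ι] [DecidableEq ι]

lemma sum_mul_eq_of_eq_isotropicTensor_add {T : ι → ι → ι → ι → ℝ} {A B C : ℝ}
    (hT : ∀ a b c e, T a b c e = isotropicTensor A B a b c e +
      C * ((if a = b then 1 else 0) * (if a = c then 1 else 0) * (if a = e then 1 else 0)))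
    (x : ι → ℝ) :
    ∑ a, ∑ b, ∑ c, ∑ e, x a * x b * x c * x e * T a b c e =
      (A + 2 * B) * (∑ a, x a ^ 2) ^ 2 + C * ∑ a, x a ^ 4 := by
  have hsq : (∑ a, x a ^ 2) ^ 2 = ∑ a, ∑ b, x a ^ 2 * x b ^ 2 := by
    rw [sq, Finset.sum_mul_sum]
  simp only [hT, isotropicTensor, mul_ite, mul_one, mul_zero, mul_add, Finset.sum_add_distrib,
    Finset.sum_ite_eq, Finset.mem_univ, ↓reduceIte, Finset.sum_ite_irrel, Finset.sum_const_zero]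
  rw [hsq, Finset.mul_sum, Finset.mul_sum]
  simp only [Finset.mul_sum, ← Finset.sum_add_distrib]
  exact Finset.sum_congr rfl fun a _ =>
    congrArg₂ (· + ·) (Finset.sum_congr rfl fun b _ => by ring) (by ring)

lemma sum_isotropicTensor_diag_diag (A B : ℝ) :
    ∑ a : ι, ∑ c, isotropicTensor A B a a c c =
      (Fintype.card ι : ℝ) ^ 2 * A + 2 * Fintype.card ι * B := by
  simp only [isotropicTensor, ↓reduceIte, mul_one, mul_ite, mul_zero, Finset.sum_add_distrib,
    Finset.sum_const, Finset.card_univ, nsmul_eq_mul, ← Finset.mul_sum, Finset.sum_ite_eq,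
    Finset.mem_univ]
  ring

lemma sum_isotropicTensor_trace (A B : ℝ) :
    ∑ a : ι, ∑ b, isotropicTensor A B a b b a =
      (Fintype.card ι : ℝ) * A + Fintype.card ι * (Fintype.card ι + 1) * B := by
  simp only [isotropicTensor, mul_ite, mul_one, mul_zero, ↓reduceIte, Finset.sum_add_distrib,
    Finset.sum_ite_eq', Finset.mem_univ, ← Finset.mul_sum, Finset.sum_const, Finset.card_univ,
    nsmul_eq_mul]
  ring

end Contractions

lemma isotropicTensor_eq_of_contractions {ι : Type*} [DecidableEq ι] {d n A B : ℝ} (hd : 2 ≤ d)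
    (h1 : d ^ 2 * A + 2 * d * B = n ^ 2) (h2 : d * A + d * (d + 1) * B = n) (a b c e : ι) :
    isotropicTensor A B a b c e =
      (n * (d - n) / (d * (d - 1) * (d + 2))) *
          ((if a = b then 1 else 0) * (if c = e then 1 else 0)
            + (if a = c then 1 else 0) * (if b = e then 1 else 0)
            + (if a = e then 1 else 0) * (if b = c then 1 else 0))
        + (n * (n - 1) / (d * (d - 1))) * ((if a = b then 1 else 0) * (if c = e then 1 else 0)) := by
  have hd0 : d ≠ 0 := by linarith
  have hd1 : d - 1 ≠ 0 := by linarith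
  have hd2 : d + 2 ≠ 0 := by linarith
  have hB : B = n * (d - n) / (d * (d - 1) * (d + 2)) := by
    field_simp
    linear_combination d * h2 - h1
  have hA : A = B + n * (n - 1) / (d * (d - 1)) := by
    rw [hB]
    field_simp
    linear_combination (d + 1) * h1 - 2 * h2
  rw [hA, hB, isotropicTensor]
  ring

section Isotropy

variable {ι : Type*} [Fintype ι] [DecidableEq ι] {ν : Measure (Matrix ι ι ℝ)}
    (hν : IsOrthConjInvariant ν)
    (hint : ∀ a b c e, Integrable (fun M : Matrix ι ι ℝ => M a b * M c e) ν)
    (hsymm : ∀ᵐ M ∂ν, Mᵀ = M)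
include hν hint hsymm

theorem secondMoment_diag_eq {I J : ι} (hIJ : I ≠ J) :
    secondMoment ν I I I I = secondMoment ν I I J J + 2 * secondMoment ν I J I J := by
  set v : ι → ℝ := Pi.single I (3 / 5) + Pi.single J (4 / 5)
  have hv : v ⬝ᵥ v = 1 := by
    rw [dotProduct, Fintype.sum_eq_add I J hIJ fun k hk => by simp [v, hk.1, hk.2]]
    norm_num [v, hIJ, hIJ.symm]
  have hQ := householder_mem_orthogonalGroup hv
  have hrow2 : ∑ k, householder v I k ^ 2 = 1 := by
    simpa [mul_apply, sq] using congrFun₂ ((mem_orthogonalGroup_iff ι ℝ).1 hQ) I I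
  have hrow4 : ∑ k, householder v I k ^ 4 = (7 / 25) ^ 4 + (24 / 25) ^ 4 := by
    rw [Fintype.sum_eq_add I J hIJ fun k hk => by
      simp [householder, v, vecMulVec_apply, one_apply, hk.1, hk.2, Ne.symm hk.1]]
    norm_num [householder, v, vecMulVec_apply, hIJ, hIJ.symm]
  have hsum := secondMoment_eq_sum hν hint hQ I I I I
  rw [sum_mul_eq_of_eq_isotropicTensor_add (secondMoment_eq_isotropicTensor_add hν hint hsymm hIJ),
    hrow2, hrow4] at hsum
  linarith

theorem secondMoment_eq_isotropicTensor {I J : ι} (hIJ : I ≠ J) (a b c e : ι) :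
    secondMoment ν a b c e =
      isotropicTensor (secondMoment ν I I J J) (secondMoment ν I J I J) a b c e := by
  rw [secondMoment_eq_isotropicTensor_add hν hint hsymm hIJ, secondMoment_diag_eq hν hint hsymm hIJ]
  ring

end Isotropy

section ConjugatedProjection

variable {ι : Type*} [Fintype ι] [DecidableEq ι] (P₀ : Matrix ι ι ℝ)

def conjMap (R : orthogonalGroup ι ℝ) : Matrix ι ι ℝ :=
  (R : Matrix ι ι ℝ) * P₀ * (R : Matrix ι ι ℝ)ᵀ

@[fun_prop]
lemma measurable_conjMap : Measurable (conjMap P₀) :=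
  ((continuous_subtype_val.matrix_mul continuous_const).matrix_mul
    continuous_subtype_val.matrix_transpose).measurable

lemma conjMap_mul (Q R : orthogonalGroup ι ℝ) :
    conjMap P₀ (Q * R) = (Q : Matrix ι ι ℝ) * conjMap P₀ R * (Q : Matrix ι ι ℝ)ᵀ := by
  simp only [conjMap, Submonoid.coe_mul, transpose_mul, Matrix.mul_assoc]

lemma conjMap_transpose (hsym : P₀ᵀ = P₀) (R : orthogonalGroup ι ℝ) :
    (conjMap P₀ R)ᵀ = conjMap P₀ R := by
  simp only [conjMap, transpose_mul, transpose_transpose, hsym, Matrix.mul_assoc]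

lemma trace_conjMap (R : orthogonalGroup ι ℝ) : (conjMap P₀ R).trace = P₀.trace := by
  rw [conjMap, trace_mul_cycle, (mem_orthogonalGroup_iff' ι ℝ).1 R.2, Matrix.one_mul]

lemma conjMap_mul_self (hidem : P₀ * P₀ = P₀) (R : orthogonalGroup ι ℝ) :
    conjMap P₀ R * conjMap P₀ R = conjMap P₀ R := by
  simp only [conjMap, Matrix.mul_assoc]
  rw [← Matrix.mul_assoc _ (R : Matrix ι ι ℝ), (mem_orthogonalGroup_iff' ι ℝ).1 R.2,
    Matrix.one_mul, ← Matrix.mul_assoc P₀, hidem]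

variable (μ : Measure (orthogonalGroup ι ℝ))

theorem isOrthConjInvariant_map_conjMap [μ.IsMulLeftInvariant] :
    IsOrthConjInvariant (μ.map (conjMap P₀)) := by
  intro Q hQ
  have hcomm : (fun M => Q * M * Qᵀ) ∘ conjMap P₀ = conjMap P₀ ∘ (⟨Q, hQ⟩ * ·) :=
    funext fun R => (conjMap_mul P₀ ⟨Q, hQ⟩ R).symm
  rw [Measure.map_map (by fun_prop) (measurable_conjMap P₀), hcomm,
    ← Measure.map_map (measurable_conjMap P₀) (measurable_const_mul _), map_mul_left_eq_self]

theorem integrable_map_conjMap [IsFiniteMeasure μ] (a b c e : ι) :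
    Integrable (fun M : Matrix ι ι ℝ => M a b * M c e) (μ.map (conjMap P₀)) := by
  rw [integrable_map_measure (by fun_prop) (measurable_conjMap P₀).aemeasurable]
  refine .of_bound (by fun_prop) ((∑ a, ∑ b, |P₀ a b|) ^ 2) (.of_forall fun R => ?_)
  have hbound (i j : ι) := abs_conj_apply_le R.2 P₀ i j
  rw [Function.comp_apply, Real.norm_eq_abs, abs_mul, sq]
  exact mul_le_mul (hbound a b) (hbound c e) (abs_nonneg _) ((abs_nonneg _).trans (hbound a b))

lemma ae_map_conjMap {p : Matrix ι ι ℝ → Prop} (hp : MeasurableSet {M | p M})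
    (h : ∀ R, p (conjMap P₀ R)) : ∀ᵐ M ∂μ.map (conjMap P₀), p M :=
  (ae_map_iff (measurable_conjMap P₀).aemeasurable hp).2 (.of_forall h)

end ConjugatedProjection

theorem stmt17_general (d n : ℕ) (hn : 0 < n) (hnd : n < d)
    (P₀ : Matrix (Fin d) (Fin d) ℝ)
    (hsym : P₀ᵀ = P₀) (hidem : P₀ * P₀ = P₀) (htr : P₀.trace = (n : ℝ))
    (μ : Measure (Matrix.orthogonalGroup (Fin d) ℝ)) [IsProbabilityMeasure μ]
    (hlinv : ∀ g : Matrix.orthogonalGroup (Fin d) ℝ, μ.map (fun r => g * r) = μ)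
    (a b c e : Fin d) :
    (∫ R : Matrix.orthogonalGroup (Fin d) ℝ,
        (((R : Matrix (Fin d) (Fin d) ℝ) * P₀ * (R : Matrix (Fin d) (Fin d) ℝ)ᵀ) a b) *
        (((R : Matrix (Fin d) (Fin d) ℝ) * P₀ * (R : Matrix (Fin d) (Fin d) ℝ)ᵀ) c e) ∂μ)
      = ((n : ℝ) * ((d : ℝ) - n) / ((d : ℝ) * ((d : ℝ) - 1) * ((d : ℝ) + 2))) *
          ((if a = b then (1:ℝ) else 0) * (if c = e then (1:ℝ) else 0)
            + (if a = c then (1:ℝ) else 0) * (if b = e then (1:ℝ) else 0)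
            + (if a = e then (1:ℝ) else 0) * (if b = c then (1:ℝ) else 0))
        + ((n : ℝ) * ((n : ℝ) - 1) / ((d : ℝ) * ((d : ℝ) - 1))) *
            ((if a = b then (1:ℝ) else 0) * (if c = e then (1:ℝ) else 0)) := by
  have : μ.IsMulLeftInvariant := ⟨hlinv⟩
  have := Measure.isProbabilityMeasure_map (μ := μ) (measurable_conjMap P₀).aemeasurable
  have hint := integrable_map_conjMap P₀ μ
  have hsymm : ∀ᵐ M ∂μ.map (conjMap P₀), Mᵀ = M := ae_map_conjMap P₀ μ
    (isClosed_eq (by fun_prop) continuous_id).measurableSet (conjMap_transpose P₀ hsym)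
  have htrace : ∀ᵐ M ∂μ.map (conjMap P₀), M.trace = (n : ℝ) := ae_map_conjMap P₀ μ
    (isClosed_eq (by fun_prop) continuous_const).measurableSet
    fun R => (trace_conjMap P₀ R).trans htr
  have htrace_sq : ∀ᵐ M ∂μ.map (conjMap P₀), (M * M).trace = (n : ℝ) := ae_map_conjMap P₀ μ
    (isClosed_eq (by fun_prop) continuous_const).measurableSet
    fun R => by rw [conjMap_mul_self P₀ hidem, trace_conjMap, htr]
  obtain ⟨A, B, hiso⟩ : ∃ A B, ∀ a b c e : Fin d,
      secondMoment (μ.map (conjMap P₀)) a b c e = isotropicTensor A B a b c e :=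
    ⟨_, _, secondMoment_eq_isotropicTensor (isOrthConjInvariant_map_conjMap P₀ μ) hint hsymm
      (I := ⟨0, by omega⟩) (J := ⟨1, by omega⟩) (by simp [Fin.ext_iff])⟩
  have h1 := sum_secondMoment_diag_diag hint htrace
  have h2 := sum_secondMoment_trace hint htrace_sq
  simp only [hiso, sum_isotropicTensor_diag_diag, sum_isotropicTensor_trace, Fintype.card_fin]
    at h1 h2
  rw [← isotropicTensor_eq_of_contractions (by exact_mod_cast (by omega : 2 ≤ d)) h1 h2, ← hiso]
  exact (integral_map (measurable_conjMap P₀).aemeasurable (hint a b c e).1).symm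

/-- Let `0 < n < d`, let `P₀` be a fixed orthogonal projection of rank `n`
(symmetric, idempotent, trace `n`), let `R` be Haar-distributed on the orthogonal group `O(d)`
(`μ` a probability measure invariant under left and right translation), and set `P = R P₀ Rᵀ`.
Then `E[P_{ab} P_{ce}] = β (δ_{ab} δ_{ce} + δ_{ac} δ_{be} + δ_{ae} δ_{bc})
+ (n(n−1)/(d(d−1))) δ_{ab} δ_{ce}` with `β = n(d−n)/(d(d−1)(d+2))`. -/
theorem stmt17 (d n : ℕ) (hn : 0 < n) (hnd : n < d)
    (P₀ : Matrix (Fin d) (Fin d) ℝ)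
    (hsym : P₀ᵀ = P₀) (hidem : P₀ * P₀ = P₀) (htr : P₀.trace = (n : ℝ))
    (μ : Measure (Matrix.orthogonalGroup (Fin d) ℝ)) [IsProbabilityMeasure μ]
    (hlinv : ∀ g : Matrix.orthogonalGroup (Fin d) ℝ, μ.map (fun r => g * r) = μ)
    (hrinv : ∀ g : Matrix.orthogonalGroup (Fin d) ℝ, μ.map (fun r => r * g) = μ)
    (a b c e : Fin d) :
    (∫ R : Matrix.orthogonalGroup (Fin d) ℝ,
        (((R : Matrix (Fin d) (Fin d) ℝ) * P₀ * (R : Matrix (Fin d) (Fin d) ℝ)ᵀ) a b) *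
        (((R : Matrix (Fin d) (Fin d) ℝ) * P₀ * (R : Matrix (Fin d) (Fin d) ℝ)ᵀ) c e) ∂μ)
      = ((n : ℝ) * ((d : ℝ) - n) / ((d : ℝ) * ((d : ℝ) - 1) * ((d : ℝ) + 2))) *
          ((if a = b then (1:ℝ) else 0) * (if c = e then (1:ℝ) else 0)
            + (if a = c then (1:ℝ) else 0) * (if b = e then (1:ℝ) else 0)
            + (if a = e then (1:ℝ) else 0) * (if b = c then (1:ℝ) else 0))
        + ((n : ℝ) * ((n : ℝ) - 1) / ((d : ℝ) * ((d : ℝ) - 1))) *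
            ((if a = b then (1:ℝ) else 0) * (if c = e then (1:ℝ) else 0)) :=
  stmt17_general d n hn hnd P₀ hsym hidem htr μ hlinv a b c e
end
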